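/- arXiv:1010.5171 — 11 statements merged into one kernel-verified Lean document; each statement's English description precedes it below -/
import Mathlib

section
/- Let R₁, R₂ be nonnegative real random variables and let V be a real random variable that is independent of R₁ and independent of R₂, defined on the same probability space, such that V < K almost surely for some constant K > 0. If R₁ ≼apl R₂, then R₁V ≼apl R₂V. -/
open MeasureTheory ProbabilityTheory Filter

/-- Asymptotic portfolio loss order for real random variables:
`limsup_{t→∞} P(U > t)/P(V ≥ t) ≤ 1` (convention 0/0 = 1), i.e.
for every `c > 1` there is `T` such that `P(U > t) ≤ c · P(V ≥ t)` for all `t ≥ T`. -/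
def AplReal {Ω : Type*} [MeasurableSpace Ω] (μ : Measure Ω) (U V : Ω → ℝ) : Prop :=
  ∀ c : ℝ, 1 < c → ∃ T : ℝ, ∀ t : ℝ, T ≤ t →
    μ {ω | t < U ω} ≤ ENNReal.ofReal c * μ {ω | t ≤ V ω}

/-! By independence, `P(R V > t)` is the mixture over the law of `V` of `P(R v > t)`.
For `v ≤ 0` the nonnegative `R₁ v` never exceeds `t > 0`, and for `0 < v < K` the event
`R₁ v > t` is `R₁ > t / v` with `t / v ≥ t / K`, which lies beyond the threshold of
`R₁ ≼apl R₂` once `t` is large. Integrating the pointwise comparison over `v` gives the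
comparison of the mixtures. -/

open scoped ENNReal

section

variable {Ω α β : Type*} [MeasurableSpace Ω] [MeasurableSpace α] [MeasurableSpace β]
  {μ : Measure Ω}

theorem ProbabilityTheory.IndepFun.measure_mem_eq_lintegral [IsFiniteMeasure μ]
    {X : Ω → α} {Y : Ω → β} (hXY : IndepFun X Y μ) (hX : Measurable X) (hY : Measurable Y)
    {s : Set (α × β)} (hs : MeasurableSet s) :
    μ {ω | (X ω, Y ω) ∈ s} = ∫⁻ x, μ {ω | (x, Y ω) ∈ s} ∂(μ.map X) :=
  calc μ {ω | (X ω, Y ω) ∈ s}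
      = μ.map (fun ω => (X ω, Y ω)) s := (Measure.map_apply (hX.prodMk hY) hs).symm
    _ = (μ.map X).prod (μ.map Y) s := by
        rw [hXY.map_prod_eq_prod_map_map hX.aemeasurable hY.aemeasurable]
    _ = ∫⁻ x, μ.map Y (Prod.mk x ⁻¹' s) ∂(μ.map X) := Measure.prod_apply hs
    _ = ∫⁻ x, μ {ω | (x, Y ω) ∈ s} ∂(μ.map X) :=
        lintegral_congr fun x => Measure.map_apply hY (measurable_prodMk_left hs)

theorem measure_lt_mul_le_of_tail_le {X Y : Ω → ℝ} (hX : ∀ ω, 0 ≤ X ω) {a : ℝ≥0∞}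
    {T t v : ℝ} (hT : ∀ s, T ≤ s → μ {ω | s < X ω} ≤ a * μ {ω | s ≤ Y ω})
    (ht : 0 < t) (hTv : T * v ≤ t) :
    μ {ω | t < X ω * v} ≤ a * μ {ω | t ≤ Y ω * v} := by
  rcases lt_or_ge 0 v with hv | hv
  · simpa only [div_lt_iff₀ hv, div_le_iff₀ hv] using hT (t / v) ((le_div_iff₀ hv).2 hTv)
  · have hempty : {ω | t < X ω * v} = ∅ := Set.eq_empty_of_forall_notMem fun ω hω =>
      (mul_nonpos_of_nonneg_of_nonpos (hX ω) hv).not_gt (ht.trans hω)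
    simp [hempty]

theorem AplReal.exists_nonneg_threshold {U V : Ω → ℝ} (h : AplReal μ U V) {c : ℝ}
    (hc : 1 < c) : ∃ T, 0 ≤ T ∧ ∀ t, T ≤ t →
      μ {ω | t < U ω} ≤ ENNReal.ofReal c * μ {ω | t ≤ V ω} :=
  let ⟨T, hT⟩ := h c hc
  ⟨max T 0, le_max_right _ _, fun t ht => hT t ((le_max_left _ _).trans ht)⟩

end

theorem apl_mul_of_bounded_general
    {Ω : Type*} [MeasurableSpace Ω] (μ : Measure Ω) [IsProbabilityMeasure μ]
    (R₁ R₂ V : Ω → ℝ)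
    (hR₁m : Measurable R₁) (hR₂m : Measurable R₂) (hVm : Measurable V)
    (hR₁0 : ∀ ω, 0 ≤ R₁ ω)
    (hInd₁ : IndepFun R₁ V μ) (hInd₂ : IndepFun R₂ V μ)
    (K : ℝ) (hVK : ∀ᵐ ω ∂μ, V ω < K)
    (hapl : AplReal μ R₁ R₂) :
    AplReal μ (fun ω => R₁ ω * V ω) (fun ω => R₂ ω * V ω) := by
  intro c hc
  obtain ⟨T, hT0, hT⟩ := hapl.exists_nonneg_threshold hc
  refine ⟨max (T * K) 1, fun t ht => ?_⟩
  have ht0 : 0 < t := zero_lt_one.trans_le ((le_max_right _ _).trans ht)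
  have hpointwise : ∀ᵐ v ∂(μ.map V),
      μ {ω | t < R₁ ω * v} ≤ ENNReal.ofReal c * μ {ω | t ≤ R₂ ω * v} := by
    filter_upwards [(ae_map_iff hVm.aemeasurable measurableSet_Iio).2 hVK] with v hv
    exact measure_lt_mul_le_of_tail_le hR₁0 hT ht0
      ((mul_le_mul_of_nonneg_left hv.le hT0).trans ((le_max_left _ _).trans ht))
  calc μ {ω | t < R₁ ω * V ω}
      = ∫⁻ v, μ {ω | t < R₁ ω * v} ∂(μ.map V) := hInd₁.symm.measure_mem_eq_lintegral hVm hR₁m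
        (s := {p | t < p.2 * p.1}) (measurableSet_lt measurable_const (by fun_prop))
    _ ≤ ∫⁻ v, ENNReal.ofReal c * μ {ω | t ≤ R₂ ω * v} ∂(μ.map V) := lintegral_mono_ae hpointwise
    _ = ENNReal.ofReal c * ∫⁻ v, μ {ω | t ≤ R₂ ω * v} ∂(μ.map V) :=
        lintegral_const_mul' _ _ ENNReal.ofReal_ne_top
    _ = ENNReal.ofReal c * μ {ω | t ≤ R₂ ω * V ω} :=
        congrArg _ (hInd₂.symm.measure_mem_eq_lintegral hVm hR₂m (s := {p | t ≤ p.2 * p.1})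
          (measurableSet_le measurable_const (by fun_prop))).symm

theorem apl_mul_of_bounded
    {Ω : Type*} [MeasurableSpace Ω] (μ : Measure Ω) [IsProbabilityMeasure μ]
    (R₁ R₂ V : Ω → ℝ)
    (hR₁m : Measurable R₁) (hR₂m : Measurable R₂) (hVm : Measurable V)
    (hR₁0 : ∀ ω, 0 ≤ R₁ ω) (hR₂0 : ∀ ω, 0 ≤ R₂ ω)
    (hInd₁ : IndepFun R₁ V μ) (hInd₂ : IndepFun R₂ V μ)
    (K : ℝ) (hK : 0 < K) (hVK : ∀ᵐ ω ∂μ, V ω < K)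
    (hapl : AplReal μ R₁ R₂) :
    AplReal μ (fun ω => R₁ ω * V ω) (fun ω => R₂ ω * V ω) :=
  apl_mul_of_bounded_general μ R₁ R₂ V hR₁m hR₂m hVm hR₁0 hInd₁ hInd₂ K hVK hapl
end

section
/- Let R₁, R₂ be nonnegative integrable real random variables with R₁ ≼st R₂, and let V be an integrable real random variable independent of R₁ and independent of R₂ with E[V] ≥ 0. Then R₁V ≼icx R₂V, i.e., E[f(R₁V)] ≤ E[f(R₂V)] for every nondecreasing convex function f : ℝ → ℝ such that both f(R₁V) and f(R₂V) are integrable. -/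
/-!
Let `s ≥ 0` be the right derivative of `f` at `0` and write
`f x = f 0 + s * x + g x`. The gap `g` is convex, nonnegative and vanishes at `0`, so
`r ↦ g (r * v)` is nondecreasing on `[0, ∞)` for every `v`. Conditioning on `V` (independence),
the stochastic order therefore gives `E[g(R₁V)] ≤ E[g(R₂V)]`; it also gives `E[R₁] ≤ E[R₂]`,
so the linear parts satisfy `s E[R₁] E[V] ≤ s E[R₂] E[V]` because `s, E[V] ≥ 0`.
-/

open MeasureTheory ProbabilityTheory Filter

/-- Usual stochastic order for real random variables:
`P(U > t) ≤ P(V > t)` for all `t ∈ ℝ`. -/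
def StOrder {Ω : Type*} [MeasurableSpace Ω] (μ : Measure Ω) (U V : Ω → ℝ) : Prop :=
  ∀ t : ℝ, μ {ω | t < U ω} ≤ μ {ω | t < V ω}

open Set

section StochasticOrder

variable {ρ₁ ρ₂ : Measure ℝ}

theorem measure_Ici_le_of_forall_measure_Ioi_le [IsFiniteMeasure ρ₂]
    (hst : ∀ t, ρ₁ (Ioi t) ≤ ρ₂ (Ioi t)) (c : ℝ) : ρ₁ (Ici c) ≤ ρ₂ (Ici c) := by
  obtain ⟨u, hu_mono, hu_lt, hu_lim⟩ := exists_seq_strictMono_tendsto c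
  have hIci : Ici c = ⋂ n, Ioi (u n) := by
    ext x
    simp only [mem_Ici, mem_iInter, mem_Ioi]
    exact ⟨fun hx n => (hu_lt n).trans_le hx,
      fun hx => le_of_tendsto' hu_lim fun n => (hx n).le⟩
  calc ρ₁ (Ici c) ≤ ⨅ n, ρ₁ (Ioi (u n)) :=
        le_iInf fun n => measure_mono (Ici_subset_Ioi.mpr (hu_lt n))
    _ ≤ ⨅ n, ρ₂ (Ioi (u n)) := iInf_mono fun n => hst (u n)
    _ = ρ₂ (Ici c) := by
      rw [hIci, Antitone.measure_iInter (fun m n hmn => Ioi_subset_Ioi (hu_mono.monotone hmn))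
        (fun n => measurableSet_Ioi.nullMeasurableSet) ⟨0, measure_ne_top _ _⟩]

theorem measure_univ_le_of_forall_measure_Ioi_le (hst : ∀ t, ρ₁ (Ioi t) ≤ ρ₂ (Ioi t)) :
    ρ₁ univ ≤ ρ₂ univ := by
  have hlim (ρ : Measure ℝ) : Tendsto (fun t => ρ (Ioi t)) atBot (nhds (ρ univ)) := by
    rw [← iUnion_Ioi]
    exact tendsto_measure_iUnion_atBot antitone_Ioi
  exact le_of_tendsto_of_tendsto' (hlim ρ₁) (hlim ρ₂) hst

theorem IsUpperSet.measure_le_of_forall_measure_Ioi_le [IsFiniteMeasure ρ₂]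
    (hst : ∀ t, ρ₁ (Ioi t) ≤ ρ₂ (Ioi t)) {U : Set ℝ} (hU : IsUpperSet U) : ρ₁ U ≤ ρ₂ U := by
  rcases U.eq_empty_or_nonempty with rfl | hne
  · simp
  by_cases hbdd : BddBelow U
  · have hIoi : Ioi (sInf U) ⊆ U := fun x hx => by
      obtain ⟨y, hyU, hyx⟩ := exists_lt_of_csInf_lt hne hx
      exact hU hyx.le hyU
    rcases mem_Ici_Ioi_of_subset_of_subset hIoi fun x hx => csInf_le hbdd hx with h | h
    · rw [h]
      exact measure_Ici_le_of_forall_measure_Ioi_le hst _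
    · rw [h]
      exact hst _
  · have hU_univ : U = univ := eq_univ_of_forall fun x => by
      obtain ⟨y, hyU, hyx⟩ := not_bddBelow_iff.mp hbdd x
      exact hU hyx.le hyU
    rw [hU_univ]
    exact measure_univ_le_of_forall_measure_Ioi_le hst

theorem Monotone.lintegral_ofReal_le_of_forall_measure_Ioi_le [IsFiniteMeasure ρ₂]
    (hst : ∀ t, ρ₁ (Ioi t) ≤ ρ₂ (Ioi t)) {g : ℝ → ℝ} (hg : Monotone g) :
    ∫⁻ x, ENNReal.ofReal (g x) ∂ρ₁ ≤ ∫⁻ x, ENNReal.ofReal (g x) ∂ρ₂ := by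
  have hg' : Monotone fun x => max (g x) 0 := fun x y hxy => max_le_max_right 0 (hg hxy)
  have hcake (ρ : Measure ℝ) : ∫⁻ x, ENNReal.ofReal (g x) ∂ρ
      = ∫⁻ t in Ioi 0, ρ {x | t < max (g x) 0} := by
    rw [← lintegral_eq_lintegral_meas_lt ρ (f := fun x => max (g x) 0)
      (ae_of_all _ fun x => le_max_right _ _) hg'.measurable.aemeasurable]
    simp [ENNReal.ofReal_max]
  rw [hcake, hcake]
  exact lintegral_mono fun t =>
    ((isUpperSet_Ioi (a := t)).preimage hg').measure_le_of_forall_measure_Ioi_le hst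

end StochasticOrder

theorem integral_le_integral_of_lintegral_ofReal_le {Ω : Type*} [MeasurableSpace Ω]
    {μ : Measure Ω} {F G : Ω → ℝ} (hF : 0 ≤ᵐ[μ] F) (hFm : AEStronglyMeasurable F μ)
    (hG : 0 ≤ᵐ[μ] G) (hGi : Integrable G μ)
    (h : ∫⁻ ω, ENNReal.ofReal (F ω) ∂μ ≤ ∫⁻ ω, ENNReal.ofReal (G ω) ∂μ) :
    ∫ ω, F ω ∂μ ≤ ∫ ω, G ω ∂μ := by
  rw [integral_eq_lintegral_of_nonneg_ae hF hFm, integral_eq_lintegral_of_nonneg_ae hG hGi.1]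
  exact ENNReal.toReal_mono hGi.lintegral_lt_top.ne h

namespace StOrder

variable {Ω : Type*} [MeasurableSpace Ω] {μ : Measure Ω} {R₁ R₂ : Ω → ℝ}

theorem map_measure_Ioi_le (hst : StOrder μ R₁ R₂) (hR₁ : AEMeasurable R₁ μ)
    (hR₂ : AEMeasurable R₂ μ) (t : ℝ) : μ.map R₁ (Ioi t) ≤ μ.map R₂ (Ioi t) := by
  rw [Measure.map_apply_of_aemeasurable hR₁ measurableSet_Ioi,
    Measure.map_apply_of_aemeasurable hR₂ measurableSet_Ioi]
  exact hst t

variable [IsFiniteMeasure μ]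

theorem lintegral_ofReal_comp_le (hst : StOrder μ R₁ R₂) (hR₁ : AEMeasurable R₁ μ)
    (hR₂ : AEMeasurable R₂ μ) {g : ℝ → ℝ} (hg : Monotone g) :
    ∫⁻ ω, ENNReal.ofReal (g (R₁ ω)) ∂μ ≤ ∫⁻ ω, ENNReal.ofReal (g (R₂ ω)) ∂μ := by
  have hm : Measurable fun x => ENNReal.ofReal (g x) :=
    ENNReal.measurable_ofReal.comp hg.measurable
  rw [← lintegral_map' hm.aemeasurable hR₁, ← lintegral_map' hm.aemeasurable hR₂]
  exact hg.lintegral_ofReal_le_of_forall_measure_Ioi_le (hst.map_measure_Ioi_le hR₁ hR₂)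

theorem integral_le (hst : StOrder μ R₁ R₂) (hR₁ : 0 ≤ᵐ[μ] R₁) (hR₁m : AEMeasurable R₁ μ)
    (hR₂ : 0 ≤ᵐ[μ] R₂) (hR₂i : Integrable R₂ μ) : ∫ ω, R₁ ω ∂μ ≤ ∫ ω, R₂ ω ∂μ :=
  integral_le_integral_of_lintegral_ofReal_le hR₁ hR₁m.aestronglyMeasurable hR₂ hR₂i
    (hst.lintegral_ofReal_comp_le hR₁m hR₂i.aemeasurable monotone_id)

variable {β : Type*} [MeasurableSpace β] {V : Ω → β}

theorem lintegral_ofReal_comp_le_of_indepFun (hst : StOrder μ R₁ R₂)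
    (hR₁ : AEMeasurable R₁ μ) (hR₂ : AEMeasurable R₂ μ) (hV : AEMeasurable V μ)
    (hInd₁ : IndepFun R₁ V μ) (hInd₂ : IndepFun R₂ V μ)
    {Φ : ℝ → β → ℝ} (hΦ : Measurable (Function.uncurry Φ)) (hmono : ∀ v, Monotone (Φ · v)) :
    ∫⁻ ω, ENNReal.ofReal (Φ (R₁ ω) (V ω)) ∂μ ≤ ∫⁻ ω, ENNReal.ofReal (Φ (R₂ ω) (V ω)) ∂μ := by
  have hm : Measurable fun p : ℝ × β => ENNReal.ofReal (Φ p.1 p.2) :=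
    ENNReal.measurable_ofReal.comp hΦ
  have hiter {R : Ω → ℝ} (hR : AEMeasurable R μ) (hInd : IndepFun R V μ) :
      ∫⁻ ω, ENNReal.ofReal (Φ (R ω) (V ω)) ∂μ
        = ∫⁻ v, ∫⁻ r, ENNReal.ofReal (Φ r v) ∂μ.map R ∂μ.map V := by
    rw [← lintegral_prod_symm _ hm.aemeasurable,
      ← (indepFun_iff_map_prod_eq_prod_map_map hR hV).mp hInd,
      lintegral_map' hm.aemeasurable (hR.prodMk hV)]
  rw [hiter hR₁ hInd₁, hiter hR₂ hInd₂]
  exact lintegral_mono fun v =>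
    (hmono v).lintegral_ofReal_le_of_forall_measure_Ioi_le (hst.map_measure_Ioi_le hR₁ hR₂)

theorem integral_comp_le_of_indepFun (hst : StOrder μ R₁ R₂)
    (hR₁ : AEMeasurable R₁ μ) (hR₂ : AEMeasurable R₂ μ) (hV : AEMeasurable V μ)
    (hR₁0 : ∀ ω, 0 ≤ R₁ ω) (hR₂0 : ∀ ω, 0 ≤ R₂ ω)
    (hInd₁ : IndepFun R₁ V μ) (hInd₂ : IndepFun R₂ V μ)
    {Φ : ℝ → β → ℝ} (hΦ : Measurable (Function.uncurry Φ)) (hΦ0 : ∀ r v, 0 ≤ Φ r v)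
    (hmono : ∀ v, MonotoneOn (Φ · v) (Ici 0))
    (hint₂ : Integrable (fun ω => Φ (R₂ ω) (V ω)) μ) :
    ∫ ω, Φ (R₁ ω) (V ω) ∂μ ≤ ∫ ω, Φ (R₂ ω) (V ω) ∂μ := by
  refine integral_le_integral_of_lintegral_ofReal_le (ae_of_all _ fun ω => hΦ0 _ _)
    (hΦ.comp_aemeasurable (hR₁.prodMk hV)).aestronglyMeasurable
    (ae_of_all _ fun ω => hΦ0 _ _) hint₂ ?_
  -- `Φ` is only monotone on `[0, ∞)`, so compare through `r ↦ Φ (max r 0) v` instead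
  have := hst.lintegral_ofReal_comp_le_of_indepFun hR₁ hR₂ hV hInd₁ hInd₂
    (Φ := fun r v => Φ (max r 0) v)
    (hΦ.comp ((measurable_fst.max measurable_const).prodMk measurable_snd))
    fun v a b hab => hmono v (le_max_right a 0) (le_max_right b 0) (max_le_max_right 0 hab)
  simpa only [max_eq_left (hR₁0 _), max_eq_left (hR₂0 _)] using this

end StOrder

noncomputable def tangentGap (f : ℝ → ℝ) (x : ℝ) : ℝ :=
  f x - (f 0 + derivWithin f (Ioi 0) 0 * x)

theorem ConvexOn.add_rightDeriv_mul_sub_le {f : ℝ → ℝ} (hf : ConvexOn ℝ univ f) (x y : ℝ) :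
    f x + derivWithin f (Ioi x) x * (y - x) ≤ f y := by
  have hx : x ∈ interior univ := by simp
  rcases lt_trichotomy x y with hxy | rfl | hyx
  · have := hf.rightDeriv_le_slope_of_mem_interior hx (mem_univ y) hxy
    rw [slope_def_field, le_div_iff₀ (sub_pos.mpr hxy)] at this
    linarith
  · simp
  · have := (hf.slope_le_leftDeriv_of_mem_interior (mem_univ y) hx hyx).trans
      (hf.leftDeriv_le_rightDeriv_of_mem_interior hx)
    rw [slope_def_field, div_le_iff₀ (sub_pos.mpr hyx)] at this
    linarith

theorem ConvexOn.tangentGap_nonneg {f : ℝ → ℝ} (hf : ConvexOn ℝ univ f) (x : ℝ) :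
    0 ≤ tangentGap f x := by
  simpa [tangentGap] using hf.add_rightDeriv_mul_sub_le 0 x

theorem ConvexOn.monotoneOn_of_isMinOn {s : Set ℝ} {φ : ℝ → ℝ} {x₀ : ℝ} (hφ : ConvexOn ℝ s φ)
    (hx₀ : x₀ ∈ s) (hmin : IsMinOn φ s x₀) : MonotoneOn φ (s ∩ Ici x₀) := by
  rintro a ⟨ha, hxa⟩ b ⟨hb, -⟩ hab
  rcases (mem_Ici.mp hxa).eq_or_lt with rfl | hxa
  · exact hmin hb
  · exact hφ.le_right_of_left_le'' hx₀ hb hxa hab (hmin ha)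

theorem ConvexOn.monotoneOn_tangentGap_mul {f : ℝ → ℝ} (hf : ConvexOn ℝ univ f) (v : ℝ) :
    MonotoneOn (fun r => tangentGap f (r * v)) (Ici 0) := by
  set s := derivWithin f (Ioi 0) 0
  have hfv : ConvexOn ℝ univ fun r => f (r * v) :=
    hf.comp_linearMap (LinearMap.mulRight ℝ v)
  have htangent : ConcaveOn ℝ univ fun r => f 0 + s * (r * v) :=
    ⟨convex_univ, fun x _ y _ a b _ _ hab => le_of_eq <| by
      simp only [smul_eq_mul]
      linear_combination (f 0) * hab⟩
  have hmin : IsMinOn (fun r => tangentGap f (r * v)) univ 0 := fun r _ => by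
    simpa [tangentGap] using hf.tangentGap_nonneg (r * v)
  rw [← univ_inter (Ici 0)]
  exact (hfv.sub htangent).monotoneOn_of_isMinOn (mem_univ 0) hmin

theorem ProbabilityTheory.IndepFun.integral_tangentGap_mul {Ω : Type*} [MeasurableSpace Ω]
    {μ : Measure Ω} [IsProbabilityMeasure μ] {R V : Ω → ℝ} (hInd : IndepFun R V μ)
    (hR : Integrable R μ) (hV : Integrable V μ) {f : ℝ → ℝ}
    (hf : Integrable (fun ω => f (R ω * V ω)) μ) :
    Integrable (fun ω => tangentGap f (R ω * V ω)) μ ∧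
      ∫ ω, tangentGap f (R ω * V ω) ∂μ = ∫ ω, f (R ω * V ω) ∂μ
        - (f 0 + derivWithin f (Ioi 0) 0 * ((∫ ω, R ω ∂μ) * ∫ ω, V ω ∂μ)) := by
  have hRV : Integrable (fun ω => R ω * V ω) μ := hInd.integrable_mul hR hV
  have htangent : Integrable (fun ω => f 0 + derivWithin f (Ioi 0) 0 * (R ω * V ω)) μ :=
    (integrable_const _).add (hRV.const_mul _)
  refine ⟨hf.sub htangent, ?_⟩
  simp only [tangentGap]
  rw [integral_sub hf htangent, integral_add (integrable_const _) (hRV.const_mul _),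
    integral_const_mul, hInd.integral_fun_mul_eq_mul_integral hR.1 hV.1]
  simp

theorem icx_of_mul_st
    {Ω : Type*} [MeasurableSpace Ω] (μ : Measure Ω) [IsProbabilityMeasure μ]
    (R₁ R₂ V : Ω → ℝ)
    (hR₁m : Measurable R₁) (hR₂m : Measurable R₂) (hVm : Measurable V)
    (hR₁0 : ∀ ω, 0 ≤ R₁ ω) (hR₂0 : ∀ ω, 0 ≤ R₂ ω)
    (hR₁i : Integrable R₁ μ) (hR₂i : Integrable R₂ μ) (hVi : Integrable V μ)
    (hInd₁ : IndepFun R₁ V μ) (hInd₂ : IndepFun R₂ V μ)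
    (hEV : 0 ≤ ∫ ω, V ω ∂μ)
    (hst : StOrder μ R₁ R₂) :
    ∀ f : ℝ → ℝ, Monotone f → ConvexOn ℝ Set.univ f →
      Integrable (fun ω => f (R₁ ω * V ω)) μ →
      Integrable (fun ω => f (R₂ ω * V ω)) μ →
      ∫ ω, f (R₁ ω * V ω) ∂μ ≤ ∫ ω, f (R₂ ω * V ω) ∂μ := by
  intro f hf_mono hf_conv hf₁ hf₂
  obtain ⟨-, hgap₁⟩ := hInd₁.integral_tangentGap_mul hR₁i hVi hf₁
  obtain ⟨hgap_int₂, hgap₂⟩ := hInd₂.integral_tangentGap_mul hR₂i hVi hf₂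
  have hgap : ∫ ω, tangentGap f (R₁ ω * V ω) ∂μ ≤ ∫ ω, tangentGap f (R₂ ω * V ω) ∂μ :=
    hst.integral_comp_le_of_indepFun hR₁m.aemeasurable hR₂m.aemeasurable hVm.aemeasurable
      hR₁0 hR₂0 hInd₁ hInd₂ (Φ := fun r v => tangentGap f (r * v))
      (by have := hf_mono.measurable; unfold tangentGap; fun_prop)
      (fun r v => hf_conv.tangentGap_nonneg _)
      hf_conv.monotoneOn_tangentGap_mul hgap_int₂
  have hmean : ∫ ω, R₁ ω ∂μ ≤ ∫ ω, R₂ ω ∂μ :=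
    hst.integral_le (ae_of_all _ hR₁0) hR₁m.aemeasurable (ae_of_all _ hR₂0) hR₂i
  have hslope : 0 ≤ derivWithin f (Ioi 0) 0 := (hf_mono.monotoneOn _).derivWithin_nonneg
  have := mul_le_mul_of_nonneg_left (mul_le_mul_of_nonneg_right hmean hEV) hslope
  linarith
end

section
/- Let U be an ℝ^d-valued random vector with ‖U‖₂ = 1 almost surely whose distribution is invariant under every orthogonal linear transformation of ℝ^d (i.e., QU has the same distribution as U for every orthogonal d×d matrix Q). Let R₁, R₂ be nonnegative real random variables, each independent of U, let μ₁, μ₂ ∈ ℝ^d with μ₁ ≤ μ₂ componentwise, let A₁, A₂ be d×d real matrices, and set Cᵢ := AᵢAᵢᵀ. Define the elliptically distributed vectors X := μ₁ + R₁·(A₁U) and Y := μ₂ + R₂·(A₂U). If R₁ ≼apl R₂ and ξᵀC₁ξ ≤ ξᵀC₂ξ for all ξ in the unit simplex Σ^d, then X ≼apl Y. -/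
open MeasureTheory ProbabilityTheory Filter Matrix

/-- Asymptotic portfolio loss order for `ℝ^d`-valued random vectors:
for every portfolio `ξ` in the unit simplex and every `c > 1` there is `T` such that
`P(ξᵀX > t) ≤ c · P(ξᵀY ≥ t)` for all `t ≥ T`. -/
def AplVec {Ω : Type*} [MeasurableSpace Ω] (μ : Measure Ω) {d : ℕ}
    (X Y : Ω → Fin d → ℝ) : Prop :=
  ∀ ξ ∈ stdSimplex ℝ (Fin d), ∀ c : ℝ, 1 < c → ∃ T : ℝ, ∀ t : ℝ, T ≤ t →
    μ {ω | t < ∑ i, ξ i * X ω i} ≤ ENNReal.ofReal c * μ {ω | t ≤ ∑ i, ξ i * Y ω i}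

/-!
Fix a portfolio `ξ` in the simplex and write `wₖ = Aₖᵀ ξ` and `σₖ = ‖wₖ‖`, so that
`ξᵀX = ξᵀμ₁ + σ₁ R₁ (v₁ᵀU)` and `ξᵀY = ξᵀμ₂ + σ₂ R₂ (v₂ᵀU)` for unit vectors `v₁, v₂`.
Rotation invariance makes `v₁ᵀU` and `v₂ᵀU` identically distributed, and they are bounded
by `1`. Conditioning on this common factor `w ≤ 1`, the tail `P(R₁ w > t)` vanishes for
`w ≤ 0` and equals `P(R₁ > t / w)` with `t / w ≥ t` otherwise, so the order `R₁ ≼ R₂`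
transfers, uniformly in `w`, to the products. The hypotheses `σ₁ ≤ σ₂` (which is
`ξᵀC₁ξ ≤ ξᵀC₂ξ`) and `ξᵀμ₁ ≤ ξᵀμ₂` only make the right-hand side heavier.
-/

section LinearAlgebra

variable {n : Type*} [Fintype n]

theorem two_mul_dotProduct_le_add (v x : n → ℝ) : 2 * (v ⬝ᵥ x) ≤ v ⬝ᵥ v + x ⬝ᵥ x := by
  simp only [dotProduct, Finset.mul_sum, ← Finset.sum_add_distrib]
  exact Finset.sum_le_sum fun i _ => by
    simpa only [sq, mul_assoc] using two_mul_le_add_sq (v i) (x i)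

theorem exists_dotProduct_self_eq_one_and_eq_smul [Nonempty n] (w : n → ℝ) :
    ∃ v : n → ℝ, v ⬝ᵥ v = 1 ∧ w = √(w ⬝ᵥ w) • v := by
  obtain rfl | hw := eq_or_ne w 0
  · classical
    obtain ⟨i⟩ := ‹Nonempty n›
    exact ⟨Pi.single i 1, by simp, by simp⟩
  have hpos : 0 < w ⬝ᵥ w := by simpa using dotProduct_self_star_pos_iff.2 hw
  have hσ : √(w ⬝ᵥ w) ≠ 0 := (Real.sqrt_pos.2 hpos).ne'
  refine ⟨(√(w ⬝ᵥ w))⁻¹ • w, ?_, by rw [smul_smul, mul_inv_cancel₀ hσ, one_smul]⟩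
  rw [smul_dotProduct, dotProduct_smul, smul_eq_mul, smul_eq_mul, ← mul_assoc, ← mul_inv,
    Real.mul_self_sqrt hpos.le, inv_mul_cancel₀ hpos.ne']

theorem dotProduct_mul_transpose_mulVec (A : Matrix n n ℝ) (ξ : n → ℝ) :
    ξ ⬝ᵥ (A * Aᵀ) *ᵥ ξ = Aᵀ *ᵥ ξ ⬝ᵥ Aᵀ *ᵥ ξ := by
  rw [← mulVec_mulVec, dotProduct_mulVec, ← mulVec_transpose]

theorem sum_mul_add_mul_mulVec (ξ ν x : n → ℝ) (r : ℝ) (A : Matrix n n ℝ) :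
    ∑ i, ξ i * (ν i + r * (A *ᵥ x) i) = ξ ⬝ᵥ ν + r * (Aᵀ *ᵥ ξ ⬝ᵥ x) := by
  rw [mulVec_transpose, ← dotProduct_mulVec]
  simp only [dotProduct, Finset.mul_sum, ← Finset.sum_add_distrib]
  exact Finset.sum_congr rfl fun i _ => by ring

open WithLp in
theorem exists_mul_transpose_eq_one_mulVec_eq [DecidableEq n] {v w : n → ℝ}
    (h : v ⬝ᵥ v = w ⬝ᵥ w) : ∃ Q : Matrix n n ℝ, Q * Qᵀ = 1 ∧ Q *ᵥ v = w := by
  let f := Submodule.reflection (ℝ ∙ (toLp 2 v - toLp 2 w))ᗮ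
  have hf : f (toLp 2 v) = toLp 2 w := Submodule.reflection_sub <| by
    rw [← sq_eq_sq₀ (norm_nonneg _) (norm_nonneg _), ← real_inner_self_eq_norm_sq,
      ← real_inner_self_eq_norm_sq, EuclideanSpace.inner_eq_star_dotProduct,
      EuclideanSpace.inner_eq_star_dotProduct]
    exact h
  let b := (EuclideanSpace.basisFun n ℝ).toBasis
  have hb : ∀ x, ⇑(b.repr x) = ofLp x := fun x => funext fun i => by simp [b]
  refine ⟨f.toLinearMap.toMatrix b b, ?_, ?_⟩
  · simpa [mem_unitaryGroup_iff, star_eq_conjTranspose] using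
      f.toMatrix_mem_unitaryGroup (EuclideanSpace.basisFun n ℝ) (EuclideanSpace.basisFun n ℝ)
  · simpa [hb, hf] using LinearMap.toMatrix_mulVec_repr b b f.toLinearMap (toLp 2 v)

end LinearAlgebra

section Probability

open scoped ENNReal

variable {Ω : Type*} [MeasurableSpace Ω] {μ : Measure Ω}

theorem identDistrib_dotProduct_of_map_mulVec_eq {n : Type*} [Fintype n] [DecidableEq n]
    {U : Ω → n → ℝ} (hU : Measurable U)
    (hrot : ∀ Q : Matrix n n ℝ, Q * Qᵀ = 1 → μ.map (fun ω => Q *ᵥ U ω) = μ.map U)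
    {v w : n → ℝ} (h : v ⬝ᵥ v = w ⬝ᵥ w) :
    IdentDistrib (fun ω => v ⬝ᵥ U ω) (fun ω => w ⬝ᵥ U ω) μ μ := by
  obtain ⟨Q, hQ, rfl⟩ := exists_mul_transpose_eq_one_mulVec_eq h.symm
  have hQT : Qᵀ * Qᵀᵀ = 1 := by rw [transpose_transpose]; exact mul_eq_one_comm.1 hQ
  have hrotU : IdentDistrib (fun ω => Qᵀ *ᵥ U ω) U μ μ :=
    ⟨(by fun_prop : Measurable fun x => Qᵀ *ᵥ x).comp_aemeasurable hU.aemeasurable,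
      hU.aemeasurable, hrot Qᵀ hQT⟩
  simpa only [Function.comp_def, dotProduct_mulVec, vecMul_transpose] using
    hrotU.comp (u := fun x => w ⬝ᵥ x) (by fun_prop)

theorem ProbabilityTheory.IndepFun.measure_preimage_eq_lintegral [IsFiniteMeasure μ]
    {α β : Type*} [MeasurableSpace α] [MeasurableSpace β] {f : Ω → α} {g : Ω → β}
    (hfg : IndepFun f g μ) (hf : Measurable f) (hg : Measurable g) {s : Set (α × β)}
    (hs : MeasurableSet s) :
    μ ((fun ω => (f ω, g ω)) ⁻¹' s) = ∫⁻ a, μ ((fun ω => (a, g ω)) ⁻¹' s) ∂μ.map f := by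
  rw [← Measure.map_apply (hf.prodMk hg) hs,
    hfg.map_prod_eq_prod_map_map hf.aemeasurable hg.aemeasurable, Measure.prod_apply hs]
  exact lintegral_congr fun a => Measure.map_apply hg (measurable_prodMk_left hs)

theorem aplVec_iff {d : ℕ} {X Y : Ω → Fin d → ℝ} :
    AplVec μ X Y ↔ ∀ ξ ∈ stdSimplex ℝ (Fin d),
      AplReal μ (fun ω => ∑ i, ξ i * X ω i) (fun ω => ∑ i, ξ i * Y ω i) :=
  Iff.rfl

theorem AplReal.const_add_of_le {U V : Ω → ℝ} (h : AplReal μ U V) {m₁ m₂ : ℝ} (hm : m₁ ≤ m₂) :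
    AplReal μ (fun ω => m₁ + U ω) (fun ω => m₂ + V ω) := by
  intro c hc
  obtain ⟨T, hT⟩ := h c hc
  refine ⟨T + m₂, fun t ht => ?_⟩
  calc μ {ω | t < m₁ + U ω} ≤ μ {ω | t - m₂ < U ω} :=
        measure_mono fun ω (hω : t < m₁ + U ω) => show t - m₂ < U ω by linarith
    _ ≤ ENNReal.ofReal c * μ {ω | t - m₂ ≤ V ω} := hT _ (by linarith)
    _ = ENNReal.ofReal c * μ {ω | t ≤ m₂ + V ω} := by simp only [sub_le_iff_le_add']

theorem AplReal.const_mul_of_le {U V : Ω → ℝ} (h : AplReal μ U V) {a b : ℝ} (ha : 0 ≤ a)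
    (hab : a ≤ b) : AplReal μ (fun ω => a * U ω) (fun ω => b * V ω) := by
  intro c hc
  obtain ⟨T, hT⟩ := h c hc
  obtain rfl | ha := ha.eq_or_lt
  · exact ⟨0, fun t ht => by simp [not_lt.2 ht]⟩
  have hb := ha.trans_le hab
  refine ⟨b * max T 0, fun t ht => ?_⟩
  have hT' : T ≤ t / b := by
    rw [le_div_iff₀' hb]; exact (mul_le_mul_of_nonneg_left (le_max_left T 0) hb.le).trans ht
  have htb : 0 ≤ t := (mul_nonneg hb.le (le_max_right T 0)).trans ht
  calc μ {ω | t < a * U ω} ≤ μ {ω | t / b < U ω} := by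
        refine measure_mono fun ω (hω : t < a * U ω) => show t / b < U ω from ?_
        have hU : 0 < U ω := pos_of_mul_pos_right (htb.trans_lt hω) ha.le
        rw [div_lt_iff₀' hb]
        exact hω.trans_le (mul_le_mul_of_nonneg_right hab hU.le)
    _ ≤ ENNReal.ofReal c * μ {ω | t / b ≤ V ω} := hT _ hT'
    _ = ENNReal.ofReal c * μ {ω | t ≤ b * V ω} := by simp only [div_le_iff₀' hb]

theorem measure_lt_mul_le_of_le_one {R₁ R₂ : Ω → ℝ} (hR₁ : ∀ ω, 0 ≤ R₁ ω) {T : ℝ} {C : ℝ≥0∞}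
    (hT : ∀ t, T ≤ t → μ {ω | t < R₁ ω} ≤ C * μ {ω | t ≤ R₂ ω}) {w t : ℝ} (hw : w ≤ 1)
    (ht : max T 0 ≤ t) : μ {ω | t < R₁ ω * w} ≤ C * μ {ω | t ≤ R₂ ω * w} := by
  have ht0 : 0 ≤ t := (le_max_right T 0).trans ht
  obtain hw0 | hw0 := le_or_gt w 0
  · have hempty : {ω | t < R₁ ω * w} = ∅ :=
      Set.eq_empty_of_forall_notMem fun ω (hω : t < R₁ ω * w) =>
        (mul_nonpos_of_nonneg_of_nonpos (hR₁ ω) hw0).not_gt (ht0.trans_lt hω)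
    simp [hempty]
  simp only [← div_lt_iff₀ hw0, ← div_le_iff₀ hw0]
  exact hT _ (((le_max_left T 0).trans ht).trans (le_div_self ht0 hw0 hw))

theorem AplReal.mul_of_indepFun [IsFiniteMeasure μ] {R₁ R₂ W₁ W₂ : Ω → ℝ} (h : AplReal μ R₁ R₂)
    (hR₁ : ∀ ω, 0 ≤ R₁ ω) (hR₁m : Measurable R₁) (hR₂m : Measurable R₂)
    (hW₁m : Measurable W₁) (hW₂m : Measurable W₂) (h₁ : IndepFun W₁ R₁ μ)
    (h₂ : IndepFun W₂ R₂ μ) (hW : IdentDistrib W₁ W₂ μ μ) (hW₁ : ∀ᵐ ω ∂μ, W₁ ω ≤ 1) :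
    AplReal μ (fun ω => R₁ ω * W₁ ω) (fun ω => R₂ ω * W₂ ω) := by
  intro c hc
  obtain ⟨T, hT⟩ := h c hc
  refine ⟨max T 0, fun t ht => ?_⟩
  have hprod : Measurable fun p : ℝ × ℝ => p.2 * p.1 := by fun_prop
  have hW₁' : ∀ᵐ w ∂μ.map W₁, w ≤ 1 := (ae_map_iff hW₁m.aemeasurable measurableSet_Iic).2 hW₁
  calc μ {ω | t < R₁ ω * W₁ ω} = ∫⁻ w, μ {ω | t < R₁ ω * w} ∂μ.map W₁ :=
        h₁.measure_preimage_eq_lintegral hW₁m hR₁m (measurableSet_lt measurable_const hprod)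
    _ ≤ ∫⁻ w, ENNReal.ofReal c * μ {ω | t ≤ R₂ ω * w} ∂μ.map W₁ :=
        lintegral_mono_ae <| hW₁'.mono fun w hw => measure_lt_mul_le_of_le_one hR₁ hT hw ht
    _ = ENNReal.ofReal c * ∫⁻ w, μ {ω | t ≤ R₂ ω * w} ∂μ.map W₂ := by
        rw [lintegral_const_mul' _ _ ENNReal.ofReal_ne_top, hW.map_eq]
    _ = ENNReal.ofReal c * μ {ω | t ≤ R₂ ω * W₂ ω} := congrArg (ENNReal.ofReal c * ·)
        (h₂.measure_preimage_eq_lintegral hW₂m hR₂m (measurableSet_le measurable_const hprod)).symm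

end Probability

theorem apl_elliptical_general
    {Ω : Type*} [MeasurableSpace Ω] (μ : Measure Ω) [IsProbabilityMeasure μ]
    {d : ℕ} (U : Ω → Fin d → ℝ) (hUm : Measurable U)
    (hUnorm : ∀ᵐ ω ∂μ, ∑ i, (U ω i) ^ 2 = 1)
    (hUrot : ∀ Q : Matrix (Fin d) (Fin d) ℝ, Q * Qᵀ = 1 →
      Measure.map (fun ω => Q.mulVec (U ω)) μ = Measure.map U μ)
    (R₁ R₂ : Ω → ℝ) (hR₁m : Measurable R₁) (hR₂m : Measurable R₂)
    (hR₁0 : ∀ ω, 0 ≤ R₁ ω)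
    (hInd₁ : IndepFun R₁ U μ) (hInd₂ : IndepFun R₂ U μ)
    (μ₁ μ₂ : Fin d → ℝ) (hμ : ∀ i, μ₁ i ≤ μ₂ i)
    (A₁ A₂ : Matrix (Fin d) (Fin d) ℝ)
    (hR : AplReal μ R₁ R₂)
    (hC : ∀ ξ ∈ stdSimplex ℝ (Fin d),
      ξ ⬝ᵥ (A₁ * A₁ᵀ).mulVec ξ ≤ ξ ⬝ᵥ (A₂ * A₂ᵀ).mulVec ξ) :
    AplVec μ (fun ω i => μ₁ i + R₁ ω * A₁.mulVec (U ω) i)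
      (fun ω i => μ₂ i + R₂ ω * A₂.mulVec (U ω) i) := by
  refine aplVec_iff.2 fun ξ hξ => ?_
  have : Nonempty (Fin d) := by
    by_contra h
    simpa [not_nonempty_iff.1 h] using hξ.2
  obtain ⟨v₁, hv₁, hw₁⟩ := exists_dotProduct_self_eq_one_and_eq_smul (A₁ᵀ *ᵥ ξ)
  obtain ⟨v₂, hv₂, hw₂⟩ := exists_dotProduct_self_eq_one_and_eq_smul (A₂ᵀ *ᵥ ξ)
  have hσ : √(A₁ᵀ *ᵥ ξ ⬝ᵥ A₁ᵀ *ᵥ ξ) ≤ √(A₂ᵀ *ᵥ ξ ⬝ᵥ A₂ᵀ *ᵥ ξ) := by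
    simpa only [dotProduct_mul_transpose_mulVec] using Real.sqrt_le_sqrt (hC ξ hξ)
  have hdot : ∀ v : Fin d → ℝ, Measurable fun x : Fin d → ℝ => v ⬝ᵥ x := fun v => by fun_prop
  have hW₁ : ∀ᵐ ω ∂μ, v₁ ⬝ᵥ U ω ≤ 1 := hUnorm.mono fun ω hω => by
    have hU : U ω ⬝ᵥ U ω = 1 := by simpa only [dotProduct, sq] using hω
    linarith [two_mul_dotProduct_le_add v₁ (U ω)]
  have hW : IdentDistrib (fun ω => v₁ ⬝ᵥ U ω) (fun ω => v₂ ⬝ᵥ U ω) μ μ :=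
    identDistrib_dotProduct_of_map_mulVec_eq hUm hUrot (hv₁.trans hv₂.symm)
  have hRW := hR.mul_of_indepFun hR₁0 hR₁m hR₂m ((hdot v₁).comp hUm) ((hdot v₂).comp hUm)
    (hInd₁.symm.comp (hdot v₁) measurable_id) (hInd₂.symm.comp (hdot v₂) measurable_id) hW hW₁
  have hξXY := (hRW.const_mul_of_le (Real.sqrt_nonneg _) hσ).const_add_of_le
    (dotProduct_le_dotProduct_of_nonneg_left hμ hξ.1)
  simp only [sum_mul_add_mul_mulVec]
  rw [hw₁, hw₂]
  simpa only [smul_dotProduct, smul_eq_mul, Function.comp_apply, mul_left_comm] using hξXY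

theorem apl_elliptical
    {Ω : Type*} [MeasurableSpace Ω] (μ : Measure Ω) [IsProbabilityMeasure μ]
    {d : ℕ} (U : Ω → Fin d → ℝ) (hUm : Measurable U)
    (hUnorm : ∀ᵐ ω ∂μ, ∑ i, (U ω i) ^ 2 = 1)
    (hUrot : ∀ Q : Matrix (Fin d) (Fin d) ℝ, Q * Qᵀ = 1 →
      Measure.map (fun ω => Q.mulVec (U ω)) μ = Measure.map U μ)
    (R₁ R₂ : Ω → ℝ) (hR₁m : Measurable R₁) (hR₂m : Measurable R₂)
    (hR₁0 : ∀ ω, 0 ≤ R₁ ω) (hR₂0 : ∀ ω, 0 ≤ R₂ ω)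
    (hInd₁ : IndepFun R₁ U μ) (hInd₂ : IndepFun R₂ U μ)
    (μ₁ μ₂ : Fin d → ℝ) (hμ : ∀ i, μ₁ i ≤ μ₂ i)
    (A₁ A₂ : Matrix (Fin d) (Fin d) ℝ)
    (hR : AplReal μ R₁ R₂)
    (hC : ∀ ξ ∈ stdSimplex ℝ (Fin d),
      ξ ⬝ᵥ (A₁ * A₁ᵀ).mulVec ξ ≤ ξ ⬝ᵥ (A₂ * A₂ᵀ).mulVec ξ) :
    AplVec μ (fun ω i => μ₁ i + R₁ ω * A₁.mulVec (U ω) i)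
      (fun ω i => μ₂ i + R₂ ω * A₂.mulVec (U ω) i) :=
  apl_elliptical_general μ U hUm hUnorm hUrot R₁ R₂ hR₁m hR₂m hR₁0 hInd₁ hInd₂ μ₁ μ₂ hμ A₁ A₂ hR hC
end

section
/- Let X and Y be ℝ^d-valued random vectors with P(‖X‖₁ > t) > 0 and P(‖Y‖₁ > t) > 0 for all t. Assume that for every ξ in the unit simplex Σ^d the limits γ_ξ(X) := lim_{t→∞} P(ξᵀX > t)/P(‖X‖₁ > t) ∈ [0,∞) and γ_ξ(Y) := lim_{t→∞} P(ξᵀY > t)/P(‖Y‖₁ > t) ∈ (0,∞) exist, with γ_ξ(Y) > 0 for all ξ. If lim_{t→∞} P(‖X‖₁ > t)/P(‖Y‖₁ > t) = 0, then X ≼apl Y. -/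
open MeasureTheory ProbabilityTheory Filter

section Ratios

variable {α : Type*} {l : Filter α} {a b e v : α → ℝ}

theorem tendsto_div_of_tendsto_div_mul_div {γ δ : ℝ} (ha : ∀ x, 0 ≤ a x)
    (hab : ∀ x, a x ≤ b x)
    (hγ : Tendsto (fun x => a x / b x) l (nhds γ))
    (hδ : Tendsto (fun x => b x / e x) l (nhds δ)) :
    Tendsto (fun x => a x / e x) l (nhds (γ * δ)) := by
  refine (hγ.mul hδ).congr fun x => ?_
  -- where `b x = 0`, `a x = 0` too, so the identity survives the junk value `y / 0 = 0`
  rcases (ha x).trans (hab x) |>.eq_or_lt with hb | hb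
  · have ha0 : a x = 0 := le_antisymm (hab x |>.trans_eq hb.symm) (ha x)
    simp [ha0, ← hb]
  · exact div_mul_div_cancel₀ hb.ne'

theorem eventually_lt_of_tendsto_div_lt {γ γ' : ℝ} (he : ∀ x, 0 ≤ e x)
    (hγ : Tendsto (fun x => a x / e x) l (nhds γ))
    (hγ' : Tendsto (fun x => v x / e x) l (nhds γ')) (hlt : γ < γ') :
    ∀ᶠ x in l, a x < v x := by
  filter_upwards [hγ.eventually_lt hγ' hlt] with x hx
  rcases (he x).eq_or_lt with he0 | hepos
  · simp [← he0] at hx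
  · exact (div_lt_div_iff_of_pos_right hepos).1 hx

end Ratios

theorem sum_mul_le_sum_abs_of_mem_stdSimplex {ι : Type*} [Fintype ι] {ξ : ι → ℝ}
    (hξ : ξ ∈ stdSimplex ℝ ι) (x : ι → ℝ) : ∑ i, ξ i * x i ≤ ∑ i, |x i| :=
  Finset.sum_le_sum fun i _ =>
    have ⟨h0, h1⟩ := mem_Icc_of_mem_stdSimplex hξ i
    calc ξ i * x i ≤ ξ i * |x i| := mul_le_mul_of_nonneg_left (le_abs_self _) h0
      _ ≤ |x i| := mul_le_of_le_one_left (abs_nonneg _) h1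

theorem aplVec_of_eventually_le {Ω : Type*} [MeasurableSpace Ω] (μ : Measure Ω) {d : ℕ}
    (X Y : Ω → Fin d → ℝ)
    (h : ∀ ξ ∈ stdSimplex ℝ (Fin d), ∀ᶠ t in atTop,
      μ {ω | t < ∑ i, ξ i * X ω i} ≤ μ {ω | t < ∑ i, ξ i * Y ω i}) :
    AplVec μ X Y := by
  intro ξ hξ c hc
  obtain ⟨T, hT⟩ := eventually_atTop.1 (h ξ hξ)
  refine ⟨T, fun t ht => ?_⟩
  calc μ {ω | t < ∑ i, ξ i * X ω i}
      ≤ μ {ω | t < ∑ i, ξ i * Y ω i} := hT t ht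
    _ ≤ μ {ω | t ≤ ∑ i, ξ i * Y ω i} := measure_mono fun ω (hω : t < _) => hω.le
    _ ≤ ENNReal.ofReal c * μ {ω | t ≤ ∑ i, ξ i * Y ω i} :=
      le_mul_of_one_le_left zero_le (ENNReal.one_le_ofReal.2 hc.le)

theorem apl_of_negligible_norm_tail_general
    {Ω : Type*} [MeasurableSpace Ω] (μ : Measure Ω) [IsProbabilityMeasure μ]
    {d : ℕ} (X Y : Ω → Fin d → ℝ)
    (γX γY : (Fin d → ℝ) → ℝ)
    (hγX : ∀ ξ ∈ stdSimplex ℝ (Fin d), 0 ≤ γX ξ ∧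
      Tendsto (fun t : ℝ =>
          (μ {ω | t < ∑ i, ξ i * X ω i}).toReal / (μ {ω | t < ∑ i, |X ω i|}).toReal)
        atTop (nhds (γX ξ)))
    (hγY : ∀ ξ ∈ stdSimplex ℝ (Fin d), 0 < γY ξ ∧
      Tendsto (fun t : ℝ =>
          (μ {ω | t < ∑ i, ξ i * Y ω i}).toReal / (μ {ω | t < ∑ i, |Y ω i|}).toReal)
        atTop (nhds (γY ξ)))
    (hratio : Tendsto (fun t : ℝ =>
        (μ {ω | t < ∑ i, |X ω i|}).toReal / (μ {ω | t < ∑ i, |Y ω i|}).toReal)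
      atTop (nhds 0)) :
    AplVec μ X Y := by
  refine aplVec_of_eventually_le μ X Y fun ξ hξ => ?_
  have htail_le : ∀ t : ℝ,
      (μ {ω | t < ∑ i, ξ i * X ω i}).toReal ≤ (μ {ω | t < ∑ i, |X ω i|}).toReal := fun t =>
    ENNReal.toReal_mono (measure_ne_top μ _) <| measure_mono fun ω (hω : t < _) =>
      hω.trans_le (sum_mul_le_sum_abs_of_mem_stdSimplex hξ (X ω))
  have hXξ_normY := tendsto_div_of_tendsto_div_mul_div (fun _ => ENNReal.toReal_nonneg)
    htail_le (hγX ξ hξ).2 hratio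
  rw [mul_zero] at hXξ_normY
  filter_upwards [eventually_lt_of_tendsto_div_lt (fun _ => ENNReal.toReal_nonneg)
    hXξ_normY (hγY ξ hξ).2 (hγY ξ hξ).1] with t ht
  exact (ENNReal.toReal_le_toReal (measure_ne_top μ _) (measure_ne_top μ _)).1 ht.le

theorem apl_of_negligible_norm_tail
    {Ω : Type*} [MeasurableSpace Ω] (μ : Measure Ω) [IsProbabilityMeasure μ]
    {d : ℕ} (X Y : Ω → Fin d → ℝ)
    (hX : ∀ t : ℝ, 0 < μ {ω | t < ∑ i, |X ω i|})
    (hY : ∀ t : ℝ, 0 < μ {ω | t < ∑ i, |Y ω i|})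
    (γX γY : (Fin d → ℝ) → ℝ)
    (hγX : ∀ ξ ∈ stdSimplex ℝ (Fin d), 0 ≤ γX ξ ∧
      Tendsto (fun t : ℝ =>
          (μ {ω | t < ∑ i, ξ i * X ω i}).toReal / (μ {ω | t < ∑ i, |X ω i|}).toReal)
        atTop (nhds (γX ξ)))
    (hγY : ∀ ξ ∈ stdSimplex ℝ (Fin d), 0 < γY ξ ∧
      Tendsto (fun t : ℝ =>
          (μ {ω | t < ∑ i, ξ i * Y ω i}).toReal / (μ {ω | t < ∑ i, |Y ω i|}).toReal)
        atTop (nhds (γY ξ)))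
    (hratio : Tendsto (fun t : ℝ =>
        (μ {ω | t < ∑ i, |X ω i|}).toReal / (μ {ω | t < ∑ i, |Y ω i|}).toReal)
      atTop (nhds 0)) :
    AplVec μ X Y :=
  apl_of_negligible_norm_tail_general μ X Y γX γY hγX hγY hratio
end

section
/- Let X and Y be ℝ^d-valued random vectors such that ‖X‖₁ is regularly varying with tail index α_X > 0 and ‖Y‖₁ is regularly varying with tail index α_Y > 0, where α_X > α_Y. Assume that for every ξ in the unit simplex Σ^d the limits γ_ξ(X) := lim_{t→∞} P(ξᵀX > t)/P(‖X‖₁ > t) ∈ [0,∞) and γ_ξ(Y) := lim_{t→∞} P(ξᵀY > t)/P(‖Y‖₁ > t) ∈ (0,∞) exist, with γ_ξ(Y) > 0 for all ξ. Then X ≼apl Y. -/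
/-!
Since `‖X‖₁` has the larger tail index, its tail is negligible against the tail of `‖Y‖₁`:
the ratio `h = P(‖X‖₁ > t) / P(‖Y‖₁ > t)` eventually contracts by a factor `ρ < 1` from `t` to `2t`,
and monotonicity of both tails controls `h` between consecutive points `T 2ⁿ`. Hence
`P(ξᵀX > t) = o(P(‖Y‖₁ > t))`, while `P(ξᵀY > t)` is of exact order `γ_ξ(Y) P(‖Y‖₁ > t)` with
`γ_ξ(Y) > 0`, so eventually `P(ξᵀX > t) ≤ c P(ξᵀY ≥ t)` for every `c > 1`.
-/

open MeasureTheory ProbabilityTheory Filter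

/-- A real random variable `R` is regularly varying with tail index `α > 0`:
`P(R > t) > 0` for all `t` and `P(R > tx)/P(R > t) → x^{-α}` as `t → ∞`, for all `x > 0`. -/
def RegVarying {Ω : Type*} [MeasurableSpace Ω] (μ : Measure Ω) (R : Ω → ℝ) (α : ℝ) : Prop :=
  (∀ t : ℝ, 0 < μ {ω | t < R ω}) ∧
  ∀ x : ℝ, 0 < x →
    Tendsto (fun t : ℝ => (μ {ω | t * x < R ω}).toReal / (μ {ω | t < R ω}).toReal)
      atTop (nhds (x ^ (-α)))

open Set Topology

lemma le_pow_mul_of_forall_le_mul {φ : ℝ → ℝ} {x r T : ℝ} (hx : 1 ≤ x) (hT : 0 ≤ T) (hr : 0 ≤ r)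
    (hstep : ∀ t ≥ T, φ (t * x) ≤ r * φ t) (n : ℕ) : φ (T * x ^ n) ≤ r ^ n * φ T := by
  induction n with
  | zero => simp
  | succ n ih =>
    calc φ (T * x ^ (n + 1)) = φ (T * x ^ n * x) := by rw [pow_succ, mul_assoc]
      _ ≤ r * φ (T * x ^ n) := hstep _ (le_mul_of_one_le_right hT (one_le_pow₀ hx))
      _ ≤ r * (r ^ n * φ T) := mul_le_mul_of_nonneg_left ih hr
      _ = r ^ (n + 1) * φ T := by ring

theorem tendsto_zero_of_le_mul_of_le_mul_on_Ico {h : ℝ → ℝ} {x ρ K T : ℝ} (hx : 1 < x)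
    (hT : 0 < T) (hρ0 : 0 ≤ ρ) (hρ1 : ρ < 1) (hK : 0 ≤ K) (h0 : ∀ t, 0 ≤ h t)
    (hstep : ∀ t ≥ T, h (t * x) ≤ ρ * h t)
    (hIco : ∀ t ≥ T, ∀ s ∈ Ico t (t * x), h s ≤ K * h t) :
    Tendsto h atTop (𝓝 0) := by
  have hgeom : Tendsto (fun n : ℕ => K * (ρ ^ n * h T)) atTop (𝓝 0) := by
    simpa using ((tendsto_pow_atTop_nhds_zero_of_lt_one hρ0 hρ1).mul_const (h T)).const_mul K
  have hTx : ∀ n : ℕ, T ≤ T * x ^ n := fun n => le_mul_of_one_le_right hT.le (one_le_pow₀ hx.le)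
  refine tendsto_order.2 ⟨fun a ha => .of_forall fun t => ha.trans_le (h0 t), fun ε hε => ?_⟩
  obtain ⟨N, hN⟩ := eventually_atTop.1 (hgeom.eventually (gt_mem_nhds hε))
  filter_upwards [eventually_ge_atTop (T * x ^ N)] with t ht
  obtain ⟨m, hm, hm'⟩ := exists_nat_pow_near ((one_le_div hT).2 ((hTx N).trans ht)) hx
  have hNm : N ≤ m := by
    have := (pow_lt_pow_iff_right₀ hx).1 (((le_div_iff₀' hT).2 ht).trans_lt hm')
    omega
  have htm : t ∈ Ico (T * x ^ m) (T * x ^ m * x) :=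
    ⟨(le_div_iff₀' hT).1 hm, by rw [mul_assoc, ← pow_succ]; exact (div_lt_iff₀' hT).1 hm'⟩
  calc h t ≤ K * h (T * x ^ m) := hIco _ (hTx m) t htm
    _ ≤ K * (ρ ^ m * h T) :=
      mul_le_mul_of_nonneg_left (le_pow_mul_of_forall_le_mul hx.le hT.le hρ0 hstep m) hK
    _ < ε := hN m hNm

theorem tendsto_div_zero_of_tendsto_scale_ratio {f g : ℝ → ℝ} (hf : ∀ t, 0 < f t)
    (hg : ∀ t, 0 < g t) (hf_anti : Antitone f) (hg_anti : Antitone g) {x a b : ℝ} (hx : 1 < x)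
    (hab : a < b) (hfa : Tendsto (fun t => f (t * x) / f t) atTop (𝓝 a))
    (hgb : Tendsto (fun t => g (t * x) / g t) atTop (𝓝 b)) :
    Tendsto (fun t => f t / g t) atTop (𝓝 0) := by
  have ha : 0 ≤ a := ge_of_tendsto' hfa fun t => (div_pos (hf _) (hf t)).le
  obtain ⟨a', haa', ha'b⟩ := exists_between hab
  obtain ⟨b', ha'b', hb'b⟩ := exists_between ha'b
  have ha' : 0 < a' := ha.trans_lt haa'
  have hb' : 0 < b' := ha'.trans ha'b'
  obtain ⟨T₀, hT₀⟩ := eventually_atTop.1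
    ((hfa.eventually (gt_mem_nhds haa')).and (hgb.eventually (lt_mem_nhds hb'b)))
  have hT : ∀ t ≥ max 1 T₀, f (t * x) < a' * f t ∧ b' * g t < g (t * x) := fun t ht =>
    have h := hT₀ t (le_of_max_le_right ht)
    ⟨(div_lt_iff₀ (hf t)).1 h.1, (lt_div_iff₀ (hg t)).1 h.2⟩
  refine tendsto_zero_of_le_mul_of_le_mul_on_Ico (ρ := a' / b') (K := 1 / b') (T := max 1 T₀) hx
    (one_pos.trans_le (le_max_left _ _)) (by positivity) ((div_lt_one hb').2 ha'b')
    (by positivity) (fun t => (div_pos (hf t) (hg t)).le) (fun t ht => ?_) (fun t ht s hs => ?_)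
  · have hft := hf t
    have hgt := hg t
    calc f (t * x) / g (t * x) ≤ a' * f t / (b' * g t) :=
          div_le_div₀ (by positivity) (hT t ht).1.le (by positivity) (hT t ht).2.le
      _ = a' / b' * (f t / g t) := by rw [mul_div_mul_comm]
  · have hgt := hg t
    calc f s / g s ≤ f t / (b' * g t) :=
          div_le_div₀ (hf t).le (hf_anti hs.1) (by positivity)
            ((hT t ht).2.le.trans (hg_anti hs.2.le))
      _ = 1 / b' * (f t / g t) := by rw [div_mul_div_comm, one_mul]

theorem eventually_le_mul_of_tendsto_div {α : Type*} {l : Filter α} {u v w : α → ℝ} {γ c : ℝ}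
    (hw : ∀ t, 0 < w t) (hγ : 0 < γ) (hc : 0 < c)
    (hu : Tendsto (fun t => u t / w t) l (𝓝 0)) (hv : Tendsto (fun t => v t / w t) l (𝓝 γ)) :
    ∀ᶠ t in l, u t ≤ c * v t := by
  filter_upwards [hu.eventually (gt_mem_nhds (by positivity : 0 < c * (γ / 2))),
    hv.eventually (lt_mem_nhds (half_lt_self hγ))] with t hut hvt
  rw [div_lt_iff₀ (hw t)] at hut
  rw [lt_div_iff₀ (hw t)] at hvt
  calc u t ≤ c * (γ / 2 * w t) := by rw [← mul_assoc]; exact hut.le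
    _ ≤ c * v t := mul_le_mul_of_nonneg_left hvt.le hc.le

section Tail

variable {Ω : Type*} [MeasurableSpace Ω] (μ : Measure Ω) [IsFiniteMeasure μ]

lemma antitone_toReal_measure_lt (R : Ω → ℝ) : Antitone fun t => (μ {ω | t < R ω}).toReal :=
  fun _ _ hst => ENNReal.toReal_mono (measure_ne_top μ _) (measure_mono fun _ hω => hst.trans_lt hω)

lemma measure_le_ofReal_mul_of_toReal_le {s t : Set Ω} {c : ℝ} (hc : 0 ≤ c)
    (h : (μ s).toReal ≤ c * (μ t).toReal) : μ s ≤ ENNReal.ofReal c * μ t := by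
  rw [← ENNReal.ofReal_toReal (measure_ne_top μ s), ← ENNReal.ofReal_toReal (measure_ne_top μ t),
    ← ENNReal.ofReal_mul hc]
  exact ENNReal.ofReal_le_ofReal h

lemma RegVarying.toReal_measure_pos {R : Ω → ℝ} {α : ℝ} (hR : RegVarying μ R α) (t : ℝ) :
    0 < (μ {ω | t < R ω}).toReal :=
  ENNReal.toReal_pos (hR.1 t).ne' (measure_ne_top μ _)

lemma RegVarying.tendsto_div_zero {R S : Ω → ℝ} {α β : ℝ} (hR : RegVarying μ R α)
    (hS : RegVarying μ S β) (hβα : β < α) :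
    Tendsto (fun t => (μ {ω | t < R ω}).toReal / (μ {ω | t < S ω}).toReal) atTop (𝓝 0) :=
  tendsto_div_zero_of_tendsto_scale_ratio (hR.toReal_measure_pos μ) (hS.toReal_measure_pos μ)
    (antitone_toReal_measure_lt μ R) (antitone_toReal_measure_lt μ S) one_lt_two
    ((Real.rpow_lt_rpow_left_iff one_lt_two).2 (neg_lt_neg hβα)) (hR.2 2 two_pos) (hS.2 2 two_pos)

end Tail

theorem apl_of_larger_tail_index_general
    {Ω : Type*} [MeasurableSpace Ω] (μ : Measure Ω) [IsProbabilityMeasure μ]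
    {d : ℕ} (X Y : Ω → Fin d → ℝ) (αX αY : ℝ) (hαXY : αY < αX)
    (hX : RegVarying μ (fun ω => ∑ i, |X ω i|) αX)
    (hY : RegVarying μ (fun ω => ∑ i, |Y ω i|) αY)
    (γX γY : (Fin d → ℝ) → ℝ)
    (hγX : ∀ ξ ∈ stdSimplex ℝ (Fin d), 0 ≤ γX ξ ∧
      Tendsto (fun t : ℝ =>
          (μ {ω | t < ∑ i, ξ i * X ω i}).toReal / (μ {ω | t < ∑ i, |X ω i|}).toReal)
        atTop (nhds (γX ξ)))
    (hγY : ∀ ξ ∈ stdSimplex ℝ (Fin d), 0 < γY ξ ∧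
      Tendsto (fun t : ℝ =>
          (μ {ω | t < ∑ i, ξ i * Y ω i}).toReal / (μ {ω | t < ∑ i, |Y ω i|}).toReal)
        atTop (nhds (γY ξ))) :
    AplVec μ X Y := by
  intro ξ hξ c hc
  have hc0 : 0 < c := one_pos.trans hc
  have hXY := (hγX ξ hξ).2.mul (hX.tendsto_div_zero μ hY hαXY)
  rw [mul_zero] at hXY
  have hξX : Tendsto (fun t : ℝ => (μ {ω | t < ∑ i, ξ i * X ω i}).toReal /
      (μ {ω | t < ∑ i, |Y ω i|}).toReal) atTop (𝓝 0) :=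
    hXY.congr fun t => div_mul_div_cancel₀ (hX.toReal_measure_pos μ t).ne'
  obtain ⟨T, hT⟩ := eventually_atTop.1 (eventually_le_mul_of_tendsto_div
    (hY.toReal_measure_pos μ) (hγY ξ hξ).1 hc0 hξX (hγY ξ hξ).2)
  exact ⟨T, fun t ht => (measure_le_ofReal_mul_of_toReal_le μ hc0.le (hT t ht)).trans
    (by gcongr; exact le_of_lt)⟩

theorem apl_of_larger_tail_index
    {Ω : Type*} [MeasurableSpace Ω] (μ : Measure Ω) [IsProbabilityMeasure μ]
    {d : ℕ} (X Y : Ω → Fin d → ℝ) (αX αY : ℝ) (hαY : 0 < αY) (hαXY : αY < αX)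
    (hX : RegVarying μ (fun ω => ∑ i, |X ω i|) αX)
    (hY : RegVarying μ (fun ω => ∑ i, |Y ω i|) αY)
    (γX γY : (Fin d → ℝ) → ℝ)
    (hγX : ∀ ξ ∈ stdSimplex ℝ (Fin d), 0 ≤ γX ξ ∧
      Tendsto (fun t : ℝ =>
          (μ {ω | t < ∑ i, ξ i * X ω i}).toReal / (μ {ω | t < ∑ i, |X ω i|}).toReal)
        atTop (nhds (γX ξ)))
    (hγY : ∀ ξ ∈ stdSimplex ℝ (Fin d), 0 < γY ξ ∧
      Tendsto (fun t : ℝ =>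
          (μ {ω | t < ∑ i, ξ i * Y ω i}).toReal / (μ {ω | t < ∑ i, |Y ω i|}).toReal)
        atTop (nhds (γY ξ))) :
    AplVec μ X Y :=
  apl_of_larger_tail_index_general μ X Y αX αY hαXY hX hY γX γY hγX hγY
end

section
/- Let X and Y be ℝ^d-valued random vectors with P(|X⁽¹⁾| > t) > 0 and P(|Y⁽¹⁾| > t) > 0 for all t, where X⁽¹⁾, Y⁽¹⁾ denote the first components. Assume that for every ξ in the unit simplex Σ^d the limits a_ξ := lim_{t→∞} P(ξᵀX > t)/P(|X⁽¹⁾| > t) ∈ [0,∞) and b_ξ := lim_{t→∞} P(ξᵀY > t)/P(|Y⁽¹⁾| > t) ∈ (0,∞) exist. If limsup_{t→∞} P(|X⁽¹⁾| > t)/P(|Y⁽¹⁾| > t) ≤ 1 and a_ξ ≤ b_ξ for all ξ ∈ Σ^d, then X ≼apl Y. -/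
/-!
Fix `ξ` and write `f, g, F, G` for the tails of `ξᵀX`, `|X⁽¹⁾|`, `ξᵀY`, `|Y⁽¹⁾|`. Then
`f / F = (f / g) / (F / G) * (g / G)`: the first factor tends to `a_ξ / b_ξ ≤ 1` and the second
is eventually below any constant `> 1`, so `f ≤ c F` eventually for every `c > 1`, splitting
`c = √c · √c`.
-/

open MeasureTheory ProbabilityTheory Filter
open scoped ENNReal

open Topology

theorem ENNReal.eventually_toReal_div_lt_of_limsup_le_one {α : Type*} {l : Filter α}
    {u v : α → ℝ≥0∞} (h : limsup (fun x => u x / v x) l ≤ 1) {K : ℝ} (hK : 1 < K) :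
    ∀ᶠ x in l, (u x).toReal / (v x).toReal < K := by
  have hK' : limsup (fun x => u x / v x) l < ENNReal.ofReal K :=
    h.trans_lt (by simpa using hK)
  filter_upwards [eventually_lt_of_limsup_lt hK'] with x hx
  rw [← ENNReal.toReal_div]
  exact ENNReal.toReal_lt_of_lt_ofReal hx

theorem eventually_le_mul_of_tendsto_div_s9 {α : Type*} {l : Filter α} {f g F G : α → ℝ}
    {a b c : ℝ} (hf : ∀ x, 0 ≤ f x) (hg : ∀ x, 0 < g x) (hG : ∀ x, 0 ≤ G x)
    (ha : Tendsto (fun x => f x / g x) l (𝓝 a)) (hb : Tendsto (fun x => F x / G x) l (𝓝 b))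
    (hb0 : 0 < b) (hab : a ≤ b) (hgG : ∀ K, 1 < K → ∀ᶠ x in l, g x / G x < K) (hc : 1 < c) :
    ∀ᶠ x in l, f x ≤ c * F x := by
  have hs : 1 < √c := by rwa [Real.lt_sqrt zero_le_one, one_pow]
  have hratio : Tendsto (fun x => (f x / g x) / (F x / G x)) l (𝓝 (a / b)) :=
    ha.div hb hb0.ne'
  have hab' : a / b < √c := ((div_le_one hb0).2 hab).trans_lt hs
  filter_upwards [hratio.eventually (gt_mem_nhds hab'), hb.eventually (lt_mem_nhds hb0),
    hgG √c hs] with x hratio_lt hFG hgG_lt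
  have hG' : 0 < G x := (hG x).lt_of_ne fun h => by simp [← h] at hFG
  have hF : 0 < F x := (div_pos_iff_of_pos_right hG').1 hFG
  have hsplit : f x / F x = (f x / g x) / (F x / G x) * (g x / G x) := by
    field_simp [(hg x).ne']
  have hlt : f x / F x < c := by
    rw [hsplit, ← Real.mul_self_sqrt (zero_lt_one.trans hc).le]
    exact mul_lt_mul'' hratio_lt hgG_lt (div_nonneg (div_nonneg (hf x) (hg x).le) hFG.le)
      (div_nonneg (hg x).le hG'.le)
  exact ((div_lt_iff₀ hF).1 hlt).le

theorem apl_of_spectral_order_general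
    {Ω : Type*} [MeasurableSpace Ω] (μ : Measure Ω) [IsProbabilityMeasure μ]
    {d : ℕ} [NeZero d] (X Y : Ω → Fin d → ℝ)
    (hX : ∀ t : ℝ, 0 < μ {ω | t < |X ω 0|})
    (a b : (Fin d → ℝ) → ℝ)
    (ha : ∀ ξ ∈ stdSimplex ℝ (Fin d), 0 ≤ a ξ ∧
      Tendsto (fun t : ℝ =>
          (μ {ω | t < ∑ i, ξ i * X ω i}).toReal / (μ {ω | t < |X ω 0|}).toReal)
        atTop (nhds (a ξ)))
    (hb : ∀ ξ ∈ stdSimplex ℝ (Fin d), 0 < b ξ ∧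
      Tendsto (fun t : ℝ =>
          (μ {ω | t < ∑ i, ξ i * Y ω i}).toReal / (μ {ω | t < |Y ω 0|}).toReal)
        atTop (nhds (b ξ)))
    (hmarg : Filter.limsup
        (fun t : ℝ => μ {ω | t < |X ω 0|} / μ {ω | t < |Y ω 0|}) atTop ≤ 1)
    (hab : ∀ ξ ∈ stdSimplex ℝ (Fin d), a ξ ≤ b ξ) :
    AplVec μ X Y := by
  intro ξ hξ c hc
  have hle := eventually_le_mul_of_tendsto_div_s9 (fun _ => ENNReal.toReal_nonneg)
    (fun t => ENNReal.toReal_pos (hX t).ne' (measure_ne_top μ _))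
    (fun _ => ENNReal.toReal_nonneg) (ha ξ hξ).2 (hb ξ hξ).2 (hb ξ hξ).1 (hab ξ hξ)
    (fun _ hK => ENNReal.eventually_toReal_div_lt_of_limsup_le_one hmarg hK) hc
  obtain ⟨T, hT⟩ := eventually_atTop.1 hle
  refine ⟨T, fun t ht => ?_⟩
  calc μ {ω | t < ∑ i, ξ i * X ω i}
      ≤ ENNReal.ofReal c * μ {ω | t < ∑ i, ξ i * Y ω i} := by
        rw [← ENNReal.ofReal_toReal (measure_ne_top μ {ω | t < ∑ i, ξ i * Y ω i}),
          ← ENNReal.ofReal_mul (by linarith),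
          ENNReal.le_ofReal_iff_toReal_le (measure_ne_top μ _) (by positivity)]
        exact hT t ht
    _ ≤ ENNReal.ofReal c * μ {ω | t ≤ ∑ i, ξ i * Y ω i} := by gcongr; exact le_of_lt

theorem apl_of_spectral_order
    {Ω : Type*} [MeasurableSpace Ω] (μ : Measure Ω) [IsProbabilityMeasure μ]
    {d : ℕ} [NeZero d] (X Y : Ω → Fin d → ℝ)
    (hX : ∀ t : ℝ, 0 < μ {ω | t < |X ω 0|})
    (hY : ∀ t : ℝ, 0 < μ {ω | t < |Y ω 0|})
    (a b : (Fin d → ℝ) → ℝ)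
    (ha : ∀ ξ ∈ stdSimplex ℝ (Fin d), 0 ≤ a ξ ∧
      Tendsto (fun t : ℝ =>
          (μ {ω | t < ∑ i, ξ i * X ω i}).toReal / (μ {ω | t < |X ω 0|}).toReal)
        atTop (nhds (a ξ)))
    (hb : ∀ ξ ∈ stdSimplex ℝ (Fin d), 0 < b ξ ∧
      Tendsto (fun t : ℝ =>
          (μ {ω | t < ∑ i, ξ i * Y ω i}).toReal / (μ {ω | t < |Y ω 0|}).toReal)
        atTop (nhds (b ξ)))
    (hmarg : Filter.limsup
        (fun t : ℝ => μ {ω | t < |X ω 0|} / μ {ω | t < |Y ω 0|}) atTop ≤ 1)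
    (hab : ∀ ξ ∈ stdSimplex ℝ (Fin d), a ξ ≤ b ξ) :
    AplVec μ X Y :=
  apl_of_spectral_order_general μ X Y hX a b ha hb hmarg hab
end

section
/- Let Ψ be a measure on the unit simplex Σ^d ⊂ ℝ^d satisfying the canonical normalization ∫_{Σ^d} s⁽ⁱ⁾ dΨ(s) = 1 for every coordinate i = 1,…,d (so Ψ(Σ^d) = d). Then for every α ≥ 1 and every ξ ∈ Σ^d, Σᵢ₌₁^d (ξ⁽ⁱ⁾)^α ≤ ∫_{Σ^d} (Σᵢ₌₁^d ξ⁽ⁱ⁾·(s⁽ⁱ⁾)^{1/α})^α dΨ(s) ≤ 1. (The lower bound is attained by the canonical spectral measure Ψ*₀ = Σᵢ δ_{eᵢ} of asymptotic independence and the upper bound by Ψ*₁ = d·δ_{(1/d,…,1/d)} of asymptotic comonotonicity; thus Ψ*₀ ≼_{G,α} Ψ ≼_{G,α} Ψ*₁ for α ≥ 1.) -/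
/-!
Both bounds hold pointwise on the simplex and are integrated against the normalization
`∫ s⁽ⁱ⁾ dΨ = 1`. Writing `tᵢ = ξ⁽ⁱ⁾ (s⁽ⁱ⁾)^{1/α}`, superadditivity of `x ↦ x^α` gives
`Σ (ξ⁽ⁱ⁾)^α s⁽ⁱ⁾ = Σ tᵢ^α ≤ (Σ tᵢ)^α`, while Jensen's inequality for the weights `ξ` gives
`(Σ ξ⁽ⁱ⁾ (s⁽ⁱ⁾)^{1/α})^α ≤ Σ ξ⁽ⁱ⁾ s⁽ⁱ⁾`. Both outer sums are linear in `s`, so their integrals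
are `Σ (ξ⁽ⁱ⁾)^α` and `Σ ξ⁽ⁱ⁾ = 1`.
-/

open MeasureTheory Filter
open scoped ENNReal

theorem Real.sum_rpow_le_rpow_sum {ι : Type*} (s : Finset ι) {f : ι → ℝ}
    (hf : ∀ i ∈ s, 0 ≤ f i) {p : ℝ} (hp : 1 ≤ p) :
    ∑ i ∈ s, f i ^ p ≤ (∑ i ∈ s, f i) ^ p := by
  classical
  induction s using Finset.induction_on with
  | empty => simp [Real.zero_rpow (by linarith : p ≠ 0)]
  | insert a s ha ih =>
    rw [Finset.forall_mem_insert] at hf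
    rw [Finset.sum_insert ha, Finset.sum_insert ha]
    calc f a ^ p + ∑ i ∈ s, f i ^ p ≤ f a ^ p + (∑ i ∈ s, f i) ^ p := by gcongr; exact ih hf.2
      _ ≤ (f a + ∑ i ∈ s, f i) ^ p :=
        Real.add_rpow_le_rpow_add hf.1 (Finset.sum_nonneg hf.2) hp

section PointwiseBounds

variable {ι : Type*} [Fintype ι] {ξ x : ι → ℝ} {α : ℝ}

theorem sum_rpow_mul_le_rpow_sum_mul_rpow_one_div (hξ : ∀ i, 0 ≤ ξ i) (hx : ∀ i, 0 ≤ x i)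
    (hα : 1 ≤ α) : ∑ i, ξ i ^ α * x i ≤ (∑ i, ξ i * x i ^ (1 / α)) ^ α := by
  have hsum := Real.sum_rpow_le_rpow_sum Finset.univ
    (fun i _ => mul_nonneg (hξ i) (Real.rpow_nonneg (hx i) (1 / α))) hα
  simpa only [Real.mul_rpow (hξ _) (Real.rpow_nonneg (hx _) _), one_div,
    Real.rpow_inv_rpow (hx _) (by linarith : α ≠ 0)] using hsum

theorem rpow_sum_mul_rpow_one_div_le_sum_mul (hξ : ξ ∈ stdSimplex ℝ ι) (hx : ∀ i, 0 ≤ x i)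
    (hα : 1 ≤ α) : (∑ i, ξ i * x i ^ (1 / α)) ^ α ≤ ∑ i, ξ i * x i := by
  have hjensen := Real.rpow_arith_mean_le_arith_mean_rpow Finset.univ ξ (fun i => x i ^ (1 / α))
    (fun i _ => hξ.1 i) hξ.2 (fun i _ => Real.rpow_nonneg (hx i) _) hα
  simpa only [one_div, Real.rpow_inv_rpow (hx _) (by linarith : α ≠ 0)] using hjensen

end PointwiseBounds

theorem lintegral_ofReal_sum_mul_of_lintegral_eq_one {ι X : Type*} [Fintype ι]
    [MeasurableSpace X] (μ : Measure X) {f : ι → X → ℝ} (hmeas : ∀ i, Measurable (f i))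
    (hf : ∀ i x, 0 ≤ f i x) (hnorm : ∀ i, ∫⁻ x, ENNReal.ofReal (f i x) ∂μ = 1)
    (c : ι → ℝ) (hc : ∀ i, 0 ≤ c i) :
    ∫⁻ x, ENNReal.ofReal (∑ i, c i * f i x) ∂μ = ENNReal.ofReal (∑ i, c i) := by
  have hsplit : ∀ x, ENNReal.ofReal (∑ i, c i * f i x) =
      ∑ i, ENNReal.ofReal (c i) * ENNReal.ofReal (f i x) := fun x => by
    rw [ENNReal.ofReal_sum_of_nonneg fun i _ => mul_nonneg (hc i) (hf i x)]
    exact Finset.sum_congr rfl fun i _ => ENNReal.ofReal_mul (hc i)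
  simp_rw [hsplit]
  rw [lintegral_finsetSum _ fun i _ => (hmeas i).ennreal_ofReal.const_mul _,
    ENNReal.ofReal_sum_of_nonneg fun i _ => hc i]
  simp_rw [lintegral_const_mul _ (hmeas _).ennreal_ofReal, hnorm, mul_one]

theorem spectral_bounds_of_alpha_ge_one
    {d : ℕ} (Ψ : Measure {s : Fin d → ℝ // s ∈ stdSimplex ℝ (Fin d)})
    (hnorm : ∀ i : Fin d, ∫⁻ s, ENNReal.ofReal (s.val i) ∂Ψ = 1)
    (α : ℝ) (hα : 1 ≤ α) (ξ : Fin d → ℝ) (hξ : ξ ∈ stdSimplex ℝ (Fin d)) :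
    ENNReal.ofReal (∑ i, ξ i ^ α) ≤
        ∫⁻ s, ENNReal.ofReal ((∑ i, ξ i * s.val i ^ (1 / α)) ^ α) ∂Ψ ∧
      ∫⁻ s, ENNReal.ofReal ((∑ i, ξ i * s.val i ^ (1 / α)) ^ α) ∂Ψ ≤ 1 := by
  have hs : ∀ (i : Fin d) (s : {s : Fin d → ℝ // s ∈ stdSimplex ℝ (Fin d)}), 0 ≤ s.val i :=
    fun i s => s.2.1 i
  have hlinear := lintegral_ofReal_sum_mul_of_lintegral_eq_one Ψ (f := fun i s => s.val i)
    (fun i => (measurable_pi_apply i).comp measurable_subtype_coe) hs hnorm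
  constructor
  · calc ENNReal.ofReal (∑ i, ξ i ^ α)
        = ∫⁻ s, ENNReal.ofReal (∑ i, ξ i ^ α * s.val i) ∂Ψ :=
          (hlinear _ fun i => Real.rpow_nonneg (hξ.1 i) α).symm
      _ ≤ _ := lintegral_mono fun s => ENNReal.ofReal_le_ofReal <|
          sum_rpow_mul_le_rpow_sum_mul_rpow_one_div hξ.1 (hs · s) hα
  · calc _ ≤ ∫⁻ s, ENNReal.ofReal (∑ i, ξ i * s.val i) ∂Ψ :=
          lintegral_mono fun s => ENNReal.ofReal_le_ofReal <|
            rpow_sum_mul_rpow_one_div_le_sum_mul hξ (hs · s) hα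
      _ = 1 := by rw [hlinear ξ hξ.1, hξ.2, ENNReal.ofReal_one]
end

section
/- Let Ψ be a measure on the unit simplex Σ^d ⊂ ℝ^d satisfying the canonical normalization ∫_{Σ^d} s⁽ⁱ⁾ dΨ(s) = 1 for every coordinate i = 1,…,d. Then for every α ∈ (0,1] and every ξ ∈ Σ^d, 1 ≤ ∫_{Σ^d} (Σᵢ₌₁^d ξ⁽ⁱ⁾·(s⁽ⁱ⁾)^{1/α})^α dΨ(s) ≤ Σᵢ₌₁^d (ξ⁽ⁱ⁾)^α. (Thus for α ≤ 1 the ordering of Theorem 3.8(a) is reversed: Ψ*₁ ≼_{G,α} Ψ ≼_{G,α} Ψ*₀, where Ψ*₀ = Σᵢ δ_{eᵢ} and Ψ*₁ = d·δ_{(1/d,…,1/d)}.) -/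
/-!
For `α ≤ 1` the integrand `g_{ξ,α}(s) = (∑ ξᵢ sᵢ^{1/α})^α` is squeezed between two functions that
are linear in `s`: the power-mean inequality (exponent `1/α ≥ 1`) gives `∑ ξᵢ sᵢ ≤ g_{ξ,α}(s)`,
and subadditivity of `t ↦ t^α` gives `g_{ξ,α}(s) ≤ ∑ ξᵢ^α sᵢ`. The canonical normalisation
makes `∫ ∑ cᵢ sᵢ dΨ = ∑ cᵢ`, so the bounds integrate to `∑ ξᵢ = 1` and `∑ ξᵢ^α`.
-/

open MeasureTheory
open scoped ENNReal

namespace Real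

variable {ι : Type*} (s : Finset ι) {α : ℝ}

theorem rpow_sum_le_sum_rpow {f : ι → ℝ} (hf : ∀ i ∈ s, 0 ≤ f i) (hα0 : 0 < α) (hα1 : α ≤ 1) :
    (∑ i ∈ s, f i) ^ α ≤ ∑ i ∈ s, f i ^ α :=
  Finset.le_sum_of_subadditive_on_pred (· ^ α) (0 ≤ ·) (zero_rpow hα0.ne').le
    (fun _ _ hx hy => rpow_add_le_add_rpow hx hy hα0.le hα1) (fun _ _ => add_nonneg) f hf

theorem sum_mul_le_rpow_sum_mul_rpow_inv {w z : ι → ℝ} (hw : ∀ i ∈ s, 0 ≤ w i)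
    (hw1 : ∑ i ∈ s, w i = 1) (hz : ∀ i ∈ s, 0 ≤ z i) (hα0 : 0 < α) (hα1 : α ≤ 1) :
    ∑ i ∈ s, w i * z i ≤ (∑ i ∈ s, w i * z i ^ (1 / α)) ^ α := by
  have hp : 1 ≤ 1 / α := (one_le_div hα0).2 hα1
  simpa only [one_div_one_div] using arith_mean_le_rpow_mean s w z hw hw1 hz hp

theorem rpow_sum_mul_rpow_inv_le_sum_rpow_mul {w z : ι → ℝ} (hw : ∀ i ∈ s, 0 ≤ w i)
    (hz : ∀ i ∈ s, 0 ≤ z i) (hα0 : 0 < α) (hα1 : α ≤ 1) :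
    (∑ i ∈ s, w i * z i ^ (1 / α)) ^ α ≤ ∑ i ∈ s, w i ^ α * z i := by
  calc (∑ i ∈ s, w i * z i ^ (1 / α)) ^ α
      ≤ ∑ i ∈ s, (w i * z i ^ (1 / α)) ^ α :=
        rpow_sum_le_sum_rpow s (fun i hi => mul_nonneg (hw i hi) (rpow_nonneg (hz i hi) _)) hα0 hα1
    _ = ∑ i ∈ s, w i ^ α * z i := by
        refine Finset.sum_congr rfl fun i hi => ?_
        rw [mul_rpow (hw i hi) (rpow_nonneg (hz i hi) _), ← rpow_mul (hz i hi),
          one_div_mul_cancel hα0.ne', rpow_one]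

end Real

theorem MeasureTheory.lintegral_ofReal_sum_mul {X ι : Type*} [MeasurableSpace X] (μ : Measure X)
    (s : Finset ι) {c : ι → ℝ} {f : ι → X → ℝ} (hc : ∀ i ∈ s, 0 ≤ c i)
    (hf0 : ∀ i ∈ s, ∀ x, 0 ≤ f i x) (hf : ∀ i ∈ s, AEMeasurable (f i) μ) :
    ∫⁻ x, ENNReal.ofReal (∑ i ∈ s, c i * f i x) ∂μ =
      ∑ i ∈ s, ENNReal.ofReal (c i) * ∫⁻ x, ENNReal.ofReal (f i x) ∂μ := by
  have hsplit : ∀ x, ENNReal.ofReal (∑ i ∈ s, c i * f i x) =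
      ∑ i ∈ s, ENNReal.ofReal (c i) * ENNReal.ofReal (f i x) := fun x => by
    rw [ENNReal.ofReal_sum_of_nonneg fun i hi => mul_nonneg (hc i hi) (hf0 i hi x)]
    exact Finset.sum_congr rfl fun i hi => ENNReal.ofReal_mul (hc i hi)
  simp_rw [hsplit]
  rw [lintegral_finsetSum' s fun i hi => ((hf i hi).ennreal_ofReal).const_mul _]
  simp_rw [lintegral_const_mul' _ _ ENNReal.ofReal_ne_top]

def IsCanonicalSpectralMeasure {ι : Type*} [Fintype ι]
    (Ψ : Measure {s : ι → ℝ // s ∈ stdSimplex ℝ ι}) : Prop :=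
  ∀ i, ∫⁻ s, ENNReal.ofReal (s.val i) ∂Ψ = 1

theorem IsCanonicalSpectralMeasure.lintegral_ofReal_sum_mul {ι : Type*} [Fintype ι]
    {Ψ : Measure {s : ι → ℝ // s ∈ stdSimplex ℝ ι}} (hΨ : IsCanonicalSpectralMeasure Ψ)
    {c : ι → ℝ} (hc : ∀ i, 0 ≤ c i) :
    ∫⁻ s, ENNReal.ofReal (∑ i, c i * s.val i) ∂Ψ = ENNReal.ofReal (∑ i, c i) := by
  rw [MeasureTheory.lintegral_ofReal_sum_mul Ψ Finset.univ (fun i _ => hc i)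
      (fun i _ s => s.2.1 i)
      (fun i _ => ((measurable_pi_apply i).comp measurable_subtype_coe).aemeasurable),
    ENNReal.ofReal_sum_of_nonneg fun i _ => hc i]
  exact Finset.sum_congr rfl fun i _ => by rw [hΨ i, mul_one]

theorem spectral_bounds_of_alpha_le_one
    {d : ℕ} (Ψ : Measure {s : Fin d → ℝ // s ∈ stdSimplex ℝ (Fin d)})
    (hnorm : ∀ i : Fin d, ∫⁻ s, ENNReal.ofReal (s.val i) ∂Ψ = 1)
    (α : ℝ) (hα0 : 0 < α) (hα1 : α ≤ 1) (ξ : Fin d → ℝ) (hξ : ξ ∈ stdSimplex ℝ (Fin d)) :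
    1 ≤ ∫⁻ s, ENNReal.ofReal ((∑ i, ξ i * s.val i ^ (1 / α)) ^ α) ∂Ψ ∧
      ∫⁻ s, ENNReal.ofReal ((∑ i, ξ i * s.val i ^ (1 / α)) ^ α) ∂Ψ ≤
        ENNReal.ofReal (∑ i, ξ i ^ α) := by
  have hΨ : IsCanonicalSpectralMeasure Ψ := hnorm
  have hξ0 : ∀ i ∈ Finset.univ, 0 ≤ ξ i := fun i _ => hξ.1 i
  have hs0 (s : {s : Fin d → ℝ // s ∈ stdSimplex ℝ (Fin d)}) : ∀ i ∈ Finset.univ, 0 ≤ s.val i :=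
    fun i _ => s.2.1 i
  constructor
  · calc (1 : ℝ≥0∞) = ENNReal.ofReal (∑ i, ξ i) := by rw [hξ.2, ENNReal.ofReal_one]
      _ = ∫⁻ s, ENNReal.ofReal (∑ i, ξ i * s.val i) ∂Ψ :=
        (hΨ.lintegral_ofReal_sum_mul fun i => hξ.1 i).symm
      _ ≤ _ := lintegral_mono fun s => ENNReal.ofReal_le_ofReal <|
        Real.sum_mul_le_rpow_sum_mul_rpow_inv _ hξ0 hξ.2 (hs0 s) hα0 hα1
  · calc _ ≤ ∫⁻ s, ENNReal.ofReal (∑ i, ξ i ^ α * s.val i) ∂Ψ :=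
          lintegral_mono fun s => ENNReal.ofReal_le_ofReal <|
            Real.rpow_sum_mul_rpow_inv_le_sum_rpow_mul _ hξ0 (hs0 s) hα0 hα1
      _ = _ := hΨ.lintegral_ofReal_sum_mul fun i => Real.rpow_nonneg (hξ.1 i) _
end

section
/- Let α > 1 and let X, Y be ℝ^d-valued random vectors whose first absolute components |X⁽¹⁾| and |Y⁽¹⁾| are regularly varying with tail index α. Assume that for every ξ in the unit simplex Σ^d the limits a_ξ := lim_{t→∞} P(ξᵀX > t)/P(|X⁽¹⁾| > t) ∈ [0,∞) and b_ξ := lim_{t→∞} P(ξᵀY > t)/P(|Y⁽¹⁾| > t) ∈ (0,∞) exist; that limsup_{t→∞} P(|X⁽¹⁾| > t)/P(|Y⁽¹⁾| > t) = 1; and that there exists u₀ > 0 such that for all u ≥ u₀ and all ξ ∈ Σ^d, E[(ξᵀX − u)₊] ≤ E[(ξᵀY − u)₊] < ∞. Then a_ξ ≤ b_ξ for all ξ ∈ Σ^d. -/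
open MeasureTheory ProbabilityTheory Filter
open scoped ENNReal

open Topology

/-! The stop-loss transform `u ↦ E[(S - u)₊]` is read off along the geometric grid `u, cu, c²u, …`:
the layer between `cᵏu` and `cᵏ⁺¹u` contributes at least `(cᵏ⁺¹ - cᵏ)u · P(S > cᵏ⁺¹u)` and at most
`(cᵏ⁺¹ - cᵏ)u · P(S > cᵏu)`. By regular variation the tails of `ξᵀX` and `ξᵀY` decay along the grid
like `a c^{-α k}` and `b c^{-α k}` times the marginal tails, so both stop-loss transforms are
geometric series with ratio `c^{1-α} < 1`. At a large `u` where `P(|X⁽¹⁾| > u) ≈ P(|Y⁽¹⁾| > u)`,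
which exists by the limsup condition, the stop-loss inequality gives
`a c^{-α} / (1 - c^{1-α}) ≤ b / (1 - c^{1-α})` up to `ε`; letting `ε → 0` and then `c → 1` gives
`a ≤ b`. -/

lemma max_max_sub_sub_zero {s v w : ℝ} (hvw : v ≤ w) :
    max (max (s - v) 0 - (w - v)) 0 = max (s - w) 0 := by
  rcases le_total s v with h | h <;> simp only [max_def] <;> split_ifs <;> linarith

noncomputable def stopLoss {Ω : Type*} [MeasurableSpace Ω] (μ : Measure Ω) (S : Ω → ℝ) (u : ℝ) :
    ℝ :=
  ∫ ω, max (S ω - u) 0 ∂μ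

section StopLoss

variable {Ω : Type*} [MeasurableSpace Ω] {μ : Measure Ω} {S : Ω → ℝ}

lemma stopLoss_nonneg (u : ℝ) : 0 ≤ stopLoss μ S u :=
  integral_nonneg fun _ => le_max_right _ _

variable [IsFiniteMeasure μ]

lemma integrable_posPart_sub_of_le {v w : ℝ}
    (h : Integrable (fun ω => max (S ω - v) 0) μ) (hvw : v ≤ w) :
    Integrable (fun ω => max (S ω - w) 0) μ :=
  (h.sub (integrable_const (w - v))).pos_part.congr
    (Eventually.of_forall fun _ => max_max_sub_sub_zero hvw)

lemma mul_measureReal_lt_le_stopLoss_sub {v w : ℝ} (hvw : v ≤ w)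
    (h : Integrable (fun ω => max (S ω - v) 0) μ) :
    (w - v) * μ.real {ω | w < S ω} ≤ stopLoss μ S v - stopLoss μ S w := by
  have hw := integrable_posPart_sub_of_le h hvw
  rw [stopLoss, stopLoss, ← integral_sub h hw]
  calc (w - v) * μ.real {ω | w < S ω}
      ≤ (w - v) * μ.real {ω | w - v ≤ max (S ω - v) 0 - max (S ω - w) 0} := by
        refine mul_le_mul_of_nonneg_left (measureReal_mono fun ω (hω : w < S ω) => ?_)
          (sub_nonneg.2 hvw)
        show w - v ≤ max (S ω - v) 0 - max (S ω - w) 0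
        rw [max_eq_left (by linarith : 0 ≤ S ω - v),
          max_eq_left (by linarith : 0 ≤ S ω - w)]
        linarith
    _ ≤ _ :=
      mul_meas_ge_le_integral_of_nonneg (Eventually.of_forall fun ω =>
        sub_nonneg.2 (max_le_max (sub_le_sub_left hvw _) le_rfl)) (h.sub hw) _

lemma stopLoss_sub_le_mul_measureReal_lt {v w : ℝ} (hvw : v ≤ w)
    (h : Integrable (fun ω => max (S ω - v) 0) μ) :
    stopLoss μ S v - stopLoss μ S w ≤ (w - v) * μ.real {ω | v < S ω} := by
  have hw := integrable_posPart_sub_of_le h hvw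
  rw [stopLoss, stopLoss, ← integral_sub h hw,
    ← setIntegral_eq_integral_of_forall_compl_eq_zero (s := {ω | v < S ω})
      fun ω (hω : ¬v < S ω) => by simp [max_eq_right (by linarith : S ω - v ≤ 0),
        max_eq_right (by linarith : S ω - w ≤ 0)]]
  refine (Real.le_norm_self _).trans (norm_setIntegral_le_of_norm_le_const (measure_lt_top μ _)
    fun ω _ => ?_)
  rw [Real.norm_eq_abs, abs_le]
  constructor <;> rcases le_total (S ω) v with h | h <;> rcases le_total (S ω) w with h' | h' <;>
    simp only [max_def] <;> split_ifs <;> linarith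

lemma sum_mul_measureReal_lt_le_stopLoss_sub {T : ℕ → ℝ} (hT : Monotone T)
    (h : Integrable (fun ω => max (S ω - T 0) 0) μ) (K : ℕ) :
    ∑ k ∈ Finset.range K, (T (k + 1) - T k) * μ.real {ω | T (k + 1) < S ω}
      ≤ stopLoss μ S (T 0) - stopLoss μ S (T K) := by
  rw [← Finset.sum_range_sub' (fun k => stopLoss μ S (T k))]
  exact Finset.sum_le_sum fun k _ => mul_measureReal_lt_le_stopLoss_sub (hT k.le_succ)
    (integrable_posPart_sub_of_le h (hT k.zero_le))

lemma stopLoss_sub_le_sum_mul_measureReal_lt {T : ℕ → ℝ} (hT : Monotone T)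
    (h : Integrable (fun ω => max (S ω - T 0) 0) μ) (K : ℕ) :
    stopLoss μ S (T 0) - stopLoss μ S (T K)
      ≤ ∑ k ∈ Finset.range K, (T (k + 1) - T k) * μ.real {ω | T k < S ω} := by
  rw [← Finset.sum_range_sub' (fun k => stopLoss μ S (T k))]
  exact Finset.sum_le_sum fun k _ => stopLoss_sub_le_mul_measureReal_lt (hT k.le_succ)
    (integrable_posPart_sub_of_le h (hT k.zero_le))

lemma tendsto_stopLoss_atTop {u : ℝ} (h : Integrable (fun ω => max (S ω - u) 0) μ) :
    Tendsto (stopLoss μ S) atTop (𝓝 0) := by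
  have hlim := tendsto_integral_filter_of_dominated_convergence (μ := μ) (l := atTop)
    (F := fun v ω => max (S ω - v) 0) (f := 0) _
    (eventually_ge_atTop u |>.mono fun v hv =>
      (integrable_posPart_sub_of_le h hv).aestronglyMeasurable)
    (eventually_ge_atTop u |>.mono fun v hv => Eventually.of_forall fun ω => by
      rw [Real.norm_of_nonneg (le_max_right _ _)]
      exact max_le_max (sub_le_sub_left hv _) le_rfl)
    h
    (Eventually.of_forall fun ω => tendsto_const_nhds.congr' <|
      (eventually_ge_atTop (S ω)).mono fun v hv => (max_eq_right (by linarith)).symm)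
  show Tendsto (fun v => ∫ ω, max (S ω - v) 0 ∂μ) atTop (𝓝 0)
  simpa using hlim

lemma le_stopLoss_of_geometric_le_measureReal_lt {c u q M : ℝ} (hc : 1 ≤ c) (hu : 0 ≤ u)
    (hq : 0 ≤ q) (hcq : c * q < 1) (hint : Integrable (fun ω => max (S ω - u) 0) μ)
    (h : ∀ k : ℕ, M * q ^ (k + 1) ≤ μ.real {ω | c ^ (k + 1) * u < S ω}) :
    (c - 1) * u * M * q / (1 - c * q) ≤ stopLoss μ S u := by
  have hT : Monotone fun k : ℕ => c ^ k * u := fun _ _ hkl =>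
    mul_le_mul_of_nonneg_right (pow_le_pow_right₀ hc hkl) hu
  have hpartial (K : ℕ) :
      (c - 1) * u * M * q * ∑ k ∈ Finset.range K, (c * q) ^ k ≤ stopLoss μ S u := by
    have hlayers := sum_mul_measureReal_lt_le_stopLoss_sub hT (by simpa using hint) K
    simp only [pow_zero, one_mul] at hlayers
    calc (c - 1) * u * M * q * ∑ k ∈ Finset.range K, (c * q) ^ k
        = ∑ k ∈ Finset.range K, (c ^ (k + 1) * u - c ^ k * u) * (M * q ^ (k + 1)) := by
          rw [Finset.mul_sum]
          exact Finset.sum_congr rfl fun k _ => by ring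
      _ ≤ ∑ k ∈ Finset.range K, (c ^ (k + 1) * u - c ^ k * u) *
            μ.real {ω | c ^ (k + 1) * u < S ω} :=
          Finset.sum_le_sum fun k _ => mul_le_mul_of_nonneg_left (h k)
            (sub_nonneg.2 (hT k.le_succ))
      _ ≤ stopLoss μ S u := hlayers.trans (sub_le_self _ (stopLoss_nonneg _))
  simpa only [div_eq_mul_inv] using le_of_tendsto' (tendsto_const_nhds.mul
    (hasSum_geometric_of_lt_one (mul_nonneg (by linarith) hq) hcq).tendsto_sum_nat) hpartial

lemma stopLoss_le_of_measureReal_lt_le_geometric {c u ρ M : ℝ} (hc : 1 < c) (hu : 0 < u)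
    (hρ : 0 ≤ ρ) (hcρ : c * ρ < 1) (hint : Integrable (fun ω => max (S ω - u) 0) μ)
    (h : ∀ k : ℕ, μ.real {ω | c ^ k * u < S ω} ≤ M * ρ ^ k) :
    stopLoss μ S u ≤ (c - 1) * u * M / (1 - c * ρ) := by
  have hM : 0 ≤ M := by simpa using measureReal_nonneg.trans (h 0)
  have hT : Monotone fun k : ℕ => c ^ k * u := fun _ _ hkl =>
    mul_le_mul_of_nonneg_right (pow_le_pow_right₀ hc.le hkl) hu.le
  have hpartial (K : ℕ) :
      stopLoss μ S u ≤ (c - 1) * u * M / (1 - c * ρ) + stopLoss μ S (c ^ K * u) := by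
    have hlayers := stopLoss_sub_le_sum_mul_measureReal_lt hT (by simpa using hint) K
    simp only [pow_zero, one_mul] at hlayers
    have hgeom : ∑ k ∈ Finset.range K, (c * ρ) ^ k ≤ 1 / (1 - c * ρ) := by
      have := geom_sum_Ico_le_of_lt_one (m := 0) (n := K) (mul_nonneg (by linarith) hρ) hcρ
      rwa [pow_zero, ← Finset.range_eq_Ico] at this
    calc stopLoss μ S u
        ≤ ∑ k ∈ Finset.range K, (c ^ (k + 1) * u - c ^ k * u) * μ.real {ω | c ^ k * u < S ω}
          + stopLoss μ S (c ^ K * u) := by linarith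
      _ ≤ ∑ k ∈ Finset.range K, (c - 1) * u * M * (c * ρ) ^ k + stopLoss μ S (c ^ K * u) := by
          refine add_le_add_left (Finset.sum_le_sum fun k _ => ?_) _
          calc (c ^ (k + 1) * u - c ^ k * u) * μ.real {ω | c ^ k * u < S ω}
              ≤ (c ^ (k + 1) * u - c ^ k * u) * (M * ρ ^ k) :=
                mul_le_mul_of_nonneg_left (h k) (sub_nonneg.2 (hT k.le_succ))
            _ = (c - 1) * u * M * (c * ρ) ^ k := by ring
      _ ≤ (c - 1) * u * M / (1 - c * ρ) + stopLoss μ S (c ^ K * u) := by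
          rw [← Finset.mul_sum, ← mul_one_div]
          gcongr
  have htail : Tendsto (fun K : ℕ => stopLoss μ S (c ^ K * u)) atTop (𝓝 0) :=
    (tendsto_stopLoss_atTop hint).comp
      ((tendsto_pow_atTop_atTop_of_one_lt hc).atTop_mul_const hu)
  simpa using ge_of_tendsto' (tendsto_const_nhds.add htail) hpartial

end StopLoss

section Asymptotics

variable {α : Type*} {l : Filter α}

lemma frequently_mul_toReal_le_of_limsup_div_eq_one {f g : α → ℝ≥0∞} (hf : ∀ t, f t ≠ ∞)
    (hg : ∀ t, g t ≠ 0) (h : limsup (fun t => f t / g t) l = 1) {θ : ℝ} (hθ₀ : 0 < θ)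
    (hθ₁ : θ < 1) : ∃ᶠ t in l, θ * (g t).toReal ≤ (f t).toReal := by
  have hlt : ENNReal.ofReal θ < limsup (fun t => f t / g t) l := by
    rw [h]
    exact ENNReal.ofReal_lt_one.2 hθ₁
  refine (frequently_lt_of_lt_limsup (by isBoundedDefault) hlt).mono fun t ht => ?_
  have hmul := (ENNReal.lt_div_iff_mul_lt (Or.inl (hg t))
    (Or.inr (ENNReal.ofReal_pos.2 hθ₀).ne')).1 ht
  simpa [ENNReal.toReal_mul, ENNReal.toReal_ofReal hθ₀.le] using
    ENNReal.toReal_mono (hf t) hmul.le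

lemma eventually_mul_le_of_tendsto_div {f g : α → ℝ} {L r : ℝ} (hg : ∀ t, 0 < g t)
    (h : Tendsto (fun t => f t / g t) l (𝓝 L)) (hr : r < L) : ∀ᶠ t in l, r * g t ≤ f t :=
  (h.eventually_const_lt hr).mono fun t ht => ((lt_div_iff₀ (hg t)).1 ht).le

lemma eventually_le_mul_of_tendsto_div_s16 {f g : α → ℝ} {L r : ℝ} (hg : ∀ t, 0 < g t)
    (h : Tendsto (fun t => f t / g t) l (𝓝 L)) (hr : L < r) : ∀ᶠ t in l, f t ≤ r * g t :=
  (h.eventually_lt_const hr).mono fun t ht => ((div_lt_iff₀ (hg t)).1 ht).le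

lemma eventually_forall_pow_mul {P : ℝ → Prop} {c : ℝ} (hc : 1 ≤ c)
    (h : ∀ᶠ t in atTop, P t) : ∀ᶠ u in atTop, ∀ k : ℕ, P (c ^ k * u) := by
  obtain ⟨T, hT⟩ := eventually_atTop.1 h
  filter_upwards [eventually_ge_atTop T, eventually_ge_atTop 0] with u hTu hu k
  exact hT _ (hTu.trans (le_mul_of_one_le_left hu (one_le_pow₀ hc)))

end Asymptotics

section Comparison

variable {Ω : Type*} [MeasurableSpace Ω] {μ : Measure Ω} [IsFiniteMeasure μ]
  {S₁ S₂ R₁ R₂ : Ω → ℝ}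

lemma mul_div_le_div_of_stopLoss_le {a b c q ρ θ : ℝ} (hc : 1 < c) (ha : 0 ≤ a) (hb : 0 ≤ b)
    (hq : 0 ≤ q) (hcq : c * q < 1) (hρ : 0 ≤ ρ) (hcρ : c * ρ < 1)
    (hR₂ : ∀ t, 0 < μ.real {ω | t < R₂ ω})
    (hS₁ : ∀ᶠ t in atTop, a * μ.real {ω | t < R₁ ω} ≤ μ.real {ω | t < S₁ ω})
    (hS₂ : ∀ᶠ t in atTop, μ.real {ω | t < S₂ ω} ≤ b * μ.real {ω | t < R₂ ω})
    (hR₁c : ∀ᶠ t in atTop, q * μ.real {ω | t < R₁ ω} ≤ μ.real {ω | t * c < R₁ ω})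
    (hR₂c : ∀ᶠ t in atTop, μ.real {ω | t * c < R₂ ω} ≤ ρ * μ.real {ω | t < R₂ ω})
    (hR₁₂ : ∃ᶠ t in atTop, θ * μ.real {ω | t < R₂ ω} ≤ μ.real {ω | t < R₁ ω})
    (hsl : ∀ᶠ u in atTop, Integrable (fun ω => max (S₁ ω - u) 0) μ ∧
      Integrable (fun ω => max (S₂ ω - u) 0) μ ∧ stopLoss μ S₁ u ≤ stopLoss μ S₂ u) :
    a * θ * q / (1 - c * q) ≤ b / (1 - c * ρ) := by
  obtain ⟨u, hθu, hu, ⟨hint₁, hint₂, hslu⟩, hk⟩ := (hR₁₂.and_eventually <|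
    (eventually_gt_atTop 0).and <| hsl.and <|
      eventually_forall_pow_mul hc.le (hS₁.and (hS₂.and (hR₁c.and hR₂c)))).exists
  have hshift (k : ℕ) : c ^ k * u * c = c ^ (k + 1) * u := by ring
  have hR₁k (n : ℕ) : q ^ n * μ.real {ω | u < R₁ ω} ≤ μ.real {ω | c ^ n * u < R₁ ω} := by
    simpa using geom_le (u := fun k => μ.real {ω | c ^ k * u < R₁ ω}) hq n
      fun k _ => hshift k ▸ (hk k).2.2.1
  have hR₂k (n : ℕ) : μ.real {ω | c ^ n * u < R₂ ω} ≤ ρ ^ n * μ.real {ω | u < R₂ ω} := by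
    simpa using le_geom (u := fun k => μ.real {ω | c ^ k * u < R₂ ω}) hρ n
      fun k _ => hshift k ▸ (hk k).2.2.2
  have hlower (k : ℕ) : a * θ * μ.real {ω | u < R₂ ω} * q ^ (k + 1)
      ≤ μ.real {ω | c ^ (k + 1) * u < S₁ ω} :=
    calc a * θ * μ.real {ω | u < R₂ ω} * q ^ (k + 1)
        ≤ a * (q ^ (k + 1) * μ.real {ω | u < R₁ ω}) := by
          rw [show a * θ * μ.real {ω | u < R₂ ω} * q ^ (k + 1)
            = a * (q ^ (k + 1) * (θ * μ.real {ω | u < R₂ ω})) by ring]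
          gcongr
      _ ≤ a * μ.real {ω | c ^ (k + 1) * u < R₁ ω} := by gcongr; exact hR₁k _
      _ ≤ μ.real {ω | c ^ (k + 1) * u < S₁ ω} := (hk (k + 1)).1
  have hupper (k : ℕ) : μ.real {ω | c ^ k * u < S₂ ω} ≤ b * μ.real {ω | u < R₂ ω} * ρ ^ k :=
    calc μ.real {ω | c ^ k * u < S₂ ω}
        ≤ b * μ.real {ω | c ^ k * u < R₂ ω} := (hk k).2.1
      _ ≤ b * (ρ ^ k * μ.real {ω | u < R₂ ω}) := by gcongr; exact hR₂k k
      _ = b * μ.real {ω | u < R₂ ω} * ρ ^ k := by ring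
  have hchain := (le_stopLoss_of_geometric_le_measureReal_lt hc.le hu.le hq hcq hint₁ hlower).trans
    (hslu.trans (stopLoss_le_of_measureReal_lt_le_geometric hc hu hρ hcρ hint₂ hupper))
  have hscale : 0 < (c - 1) * u * μ.real {ω | u < R₂ ω} :=
    mul_pos (mul_pos (by linarith) hu) (hR₂ u)
  refine le_of_mul_le_mul_left ?_ hscale
  convert hchain using 1 <;> ring

variable {α a b : ℝ}

lemma mul_rpow_neg_le_of_stopLoss_le (hα : 1 < α) (hR₁ : RegVarying μ R₁ α)
    (hR₂ : RegVarying μ R₂ α) (ha₀ : 0 < a)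
    (ha : Tendsto (fun t => μ.real {ω | t < S₁ ω} / μ.real {ω | t < R₁ ω}) atTop (𝓝 a))
    (hb₀ : 0 ≤ b)
    (hb : Tendsto (fun t => μ.real {ω | t < S₂ ω} / μ.real {ω | t < R₂ ω}) atTop (𝓝 b))
    (hR₁₂ : limsup (fun t => μ {ω | t < R₁ ω} / μ {ω | t < R₂ ω}) atTop = 1)
    (hsl : ∀ᶠ u in atTop, Integrable (fun ω => max (S₁ ω - u) 0) μ ∧
      Integrable (fun ω => max (S₂ ω - u) 0) μ ∧ stopLoss μ S₁ u ≤ stopLoss μ S₂ u)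
    {c : ℝ} (hc : 1 < c) : a * c ^ (-α) ≤ b := by
  set β := c ^ (-α)
  have hβ : 0 < β := Real.rpow_pos_of_pos (by linarith) _
  have hcβ : c * β < 1 := by
    rw [← Real.rpow_one_add' (by linarith) (by linarith)]
    exact Real.rpow_lt_one_of_one_lt_of_neg hc (by linarith)
  have hpos₁ (t : ℝ) : 0 < μ.real {ω | t < R₁ ω} := ENNReal.toReal_pos (hR₁.1 t).ne' (by simp)
  have hpos₂ (t : ℝ) : 0 < μ.real {ω | t < R₂ ω} := ENNReal.toReal_pos (hR₂.1 t).ne' (by simp)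
  have hsmall : ∀ᶠ ε in 𝓝[>] (0 : ℝ), 0 < ε ∧ ε < a ∧ ε < β ∧ ε < 1 ∧ c * (β + ε) < 1 :=
    eventually_mem_nhdsWithin.and <| eventually_nhdsWithin_of_eventually_nhds <|
      (eventually_lt_nhds ha₀).and <| (eventually_lt_nhds hβ).and <|
        (eventually_lt_nhds one_pos).and <|
          (Continuous.tendsto' (by fun_prop) 0 (c * β) (by simp)).eventually_lt_const hcβ
  have hbound : ∀ᶠ ε in 𝓝[>] (0 : ℝ),
      (a - ε) * (1 - ε) * (β - ε) / (1 - c * (β - ε)) ≤ (b + ε) / (1 - c * (β + ε)) := by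
    filter_upwards [hsmall] with ε ⟨hε, hεa, hεβ, hε₁, hcε⟩
    exact mul_div_le_div_of_stopLoss_le hc (by linarith) (by linarith) (by linarith)
      ((mul_le_mul_of_nonneg_left (by linarith) (by linarith)).trans_lt hcβ) (by linarith) hcε
      hpos₂ (eventually_mul_le_of_tendsto_div hpos₁ ha (by linarith))
      (eventually_le_mul_of_tendsto_div_s16 hpos₂ hb (by linarith))
      (eventually_mul_le_of_tendsto_div hpos₁ (hR₁.2 c (by linarith)) (by linarith))
      (eventually_le_mul_of_tendsto_div_s16 hpos₂ (hR₂.2 c (by linarith)) (by linarith))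
      (frequently_mul_toReal_le_of_limsup_div_eq_one (fun _ => measure_ne_top μ _)
        (fun t => (hR₂.1 t).ne') hR₁₂ (by linarith) (by linarith)) hsl
  have hlim₁ : Tendsto (fun ε => (a - ε) * (1 - ε) * (β - ε) / (1 - c * (β - ε))) (𝓝[>] 0)
      (𝓝 (a * β / (1 - c * β))) := by
    have hcont : ContinuousAt (fun ε => (a - ε) * (1 - ε) * (β - ε) / (1 - c * (β - ε))) 0 := by
      fun_prop (disch := simp; linarith)
    simpa using hcont.tendsto.mono_left nhdsWithin_le_nhds
  have hlim₂ : Tendsto (fun ε => (b + ε) / (1 - c * (β + ε))) (𝓝[>] 0)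
      (𝓝 (b / (1 - c * β))) := by
    have hcont : ContinuousAt (fun ε => (b + ε) / (1 - c * (β + ε))) 0 := by
      fun_prop (disch := simp; linarith)
    simpa using hcont.tendsto.mono_left nhdsWithin_le_nhds
  exact (div_le_div_iff_of_pos_right (by linarith)).1 (le_of_tendsto_of_tendsto hlim₁ hlim₂ hbound)

theorem tail_ratio_limit_le_of_stopLoss_le (hα : 1 < α) (hR₁ : RegVarying μ R₁ α)
    (hR₂ : RegVarying μ R₂ α)
    (ha : Tendsto (fun t => μ.real {ω | t < S₁ ω} / μ.real {ω | t < R₁ ω}) atTop (𝓝 a))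
    (hb : Tendsto (fun t => μ.real {ω | t < S₂ ω} / μ.real {ω | t < R₂ ω}) atTop (𝓝 b))
    (hR₁₂ : limsup (fun t => μ {ω | t < R₁ ω} / μ {ω | t < R₂ ω}) atTop = 1)
    (hsl : ∀ᶠ u in atTop, Integrable (fun ω => max (S₁ ω - u) 0) μ ∧
      Integrable (fun ω => max (S₂ ω - u) 0) μ ∧ stopLoss μ S₁ u ≤ stopLoss μ S₂ u) :
    a ≤ b := by
  have hb₀ : 0 ≤ b := ge_of_tendsto' hb fun _ => div_nonneg measureReal_nonneg measureReal_nonneg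
  rcases le_or_gt a 0 with ha₀ | ha₀
  · linarith
  have hlim : Tendsto (fun c : ℝ => a * c ^ (-α)) (𝓝[>] 1) (𝓝 a) := by
    have hcont : ContinuousAt (fun c : ℝ => a * c ^ (-α)) 1 := by fun_prop (disch := norm_num)
    simpa using hcont.tendsto.mono_left nhdsWithin_le_nhds
  exact le_of_tendsto hlim <| eventually_nhdsWithin_of_forall fun _ hc =>
    mul_rpow_neg_le_of_stopLoss_le hα hR₁ hR₂ ha₀ ha hb₀ hb hR₁₂ hsl hc

end Comparison

theorem spectral_order_of_stop_loss_order_general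
    {Ω : Type*} [MeasurableSpace Ω] (μ : Measure Ω) [IsProbabilityMeasure μ]
    {d : ℕ} [NeZero d] (X Y : Ω → Fin d → ℝ) (α : ℝ) (hα : 1 < α)
    (hX : RegVarying μ (fun ω => |X ω 0|) α)
    (hY : RegVarying μ (fun ω => |Y ω 0|) α)
    (a b : (Fin d → ℝ) → ℝ)
    (ha : ∀ ξ ∈ stdSimplex ℝ (Fin d), 0 ≤ a ξ ∧
      Tendsto (fun t : ℝ =>
          (μ {ω | t < ∑ i, ξ i * X ω i}).toReal / (μ {ω | t < |X ω 0|}).toReal)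
        atTop (nhds (a ξ)))
    (hb : ∀ ξ ∈ stdSimplex ℝ (Fin d), 0 < b ξ ∧
      Tendsto (fun t : ℝ =>
          (μ {ω | t < ∑ i, ξ i * Y ω i}).toReal / (μ {ω | t < |Y ω 0|}).toReal)
        atTop (nhds (b ξ)))
    (hmarg : Filter.limsup
        (fun t : ℝ => μ {ω | t < |X ω 0|} / μ {ω | t < |Y ω 0|}) atTop = 1)
    (u₀ : ℝ)
    (hsl : ∀ u : ℝ, u₀ ≤ u → ∀ ξ ∈ stdSimplex ℝ (Fin d),
      Integrable (fun ω => max (∑ i, ξ i * X ω i - u) 0) μ ∧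
      Integrable (fun ω => max (∑ i, ξ i * Y ω i - u) 0) μ ∧
      ∫ ω, max (∑ i, ξ i * X ω i - u) 0 ∂μ ≤ ∫ ω, max (∑ i, ξ i * Y ω i - u) 0 ∂μ) :
    ∀ ξ ∈ stdSimplex ℝ (Fin d), a ξ ≤ b ξ := fun ξ hξ =>
  tail_ratio_limit_le_of_stopLoss_le hα hX hY (ha ξ hξ).2 (hb ξ hξ).2 hmarg
    (eventually_atTop.2 ⟨u₀, fun u hu => hsl u hu ξ hξ⟩)

theorem spectral_order_of_stop_loss_order
    {Ω : Type*} [MeasurableSpace Ω] (μ : Measure Ω) [IsProbabilityMeasure μ]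
    {d : ℕ} [NeZero d] (X Y : Ω → Fin d → ℝ) (α : ℝ) (hα : 1 < α)
    (hX : RegVarying μ (fun ω => |X ω 0|) α)
    (hY : RegVarying μ (fun ω => |Y ω 0|) α)
    (a b : (Fin d → ℝ) → ℝ)
    (ha : ∀ ξ ∈ stdSimplex ℝ (Fin d), 0 ≤ a ξ ∧
      Tendsto (fun t : ℝ =>
          (μ {ω | t < ∑ i, ξ i * X ω i}).toReal / (μ {ω | t < |X ω 0|}).toReal)
        atTop (nhds (a ξ)))
    (hb : ∀ ξ ∈ stdSimplex ℝ (Fin d), 0 < b ξ ∧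
      Tendsto (fun t : ℝ =>
          (μ {ω | t < ∑ i, ξ i * Y ω i}).toReal / (μ {ω | t < |Y ω 0|}).toReal)
        atTop (nhds (b ξ)))
    (hmarg : Filter.limsup
        (fun t : ℝ => μ {ω | t < |X ω 0|} / μ {ω | t < |Y ω 0|}) atTop = 1)
    (u₀ : ℝ) (hu₀ : 0 < u₀)
    (hsl : ∀ u : ℝ, u₀ ≤ u → ∀ ξ ∈ stdSimplex ℝ (Fin d),
      Integrable (fun ω => max (∑ i, ξ i * X ω i - u) 0) μ ∧
      Integrable (fun ω => max (∑ i, ξ i * Y ω i - u) 0) μ ∧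
      ∫ ω, max (∑ i, ξ i * X ω i - u) 0 ∂μ ≤ ∫ ω, max (∑ i, ξ i * Y ω i - u) 0 ∂μ) :
    ∀ ξ ∈ stdSimplex ℝ (Fin d), a ξ ≤ b ξ :=
  spectral_order_of_stop_loss_order_general μ X Y α hα hX hY a b ha hb hmarg u₀ hsl
end

section
/- Let α > 0 and let W be a nonnegative real random variable that is regularly varying with tail index α. Let Y = (Y⁽¹⁾,…,Y⁽ᵈ⁾) be a random vector with independent components, each with the same distribution as W, and let Z = (Z⁽¹⁾,…,Z⁽ᵈ⁾) be a random vector with totally dependent components, Z⁽ⁱ⁾ = Z⁽¹⁾ almost surely for all i, where Z⁽¹⁾ has the same distribution as W. Then: (a) if α ≥ 1, Y ≼apl Z; (b) if α ∈ (0,1], Z ≼apl Y. -/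
/-!
Write `G t = P(W > t)`. The comonotone portfolio `ξᵀZ` equals `Z⁽¹⁾` almost surely, so its tail
is exactly `G`. The independent portfolio has tail asymptotically `(∑ ξᵢ ^ α) G(t)`: the event
`ξᵀY > t` forces either one summand `ξᵢ Yᵢ` above `βt` or two coordinates above `(1 - β) t`, and
the second alternative costs `G((1 - β) t)² = o(G(t))` by independence; conversely the union of
the events `ξᵢ Yᵢ > t` has probability `1 - ∏ (1 - pᵢ) ≥ ∑ pᵢ - (∑ pᵢ)²`. On the simplex
`∑ ξᵢ ^ α ≤ 1` when `α ≥ 1` and `∑ ξᵢ ^ α ≥ 1` when `α ≤ 1`, which orders the two tails.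
-/

open MeasureTheory ProbabilityTheory Filter

open Topology

noncomputable def tailProb {Ω : Type*} [MeasurableSpace Ω] (μ : Measure Ω) (X : Ω → ℝ)
    (t : ℝ) : ℝ :=
  μ.real {ω | t < X ω}

lemma prod_one_sub_le_one_sub_sum_add_sq {ι : Type*} (s : Finset ι) {p : ι → ℝ}
    (h0 : ∀ i ∈ s, 0 ≤ p i) (h1 : ∀ i ∈ s, p i ≤ 1) :
    ∏ i ∈ s, (1 - p i) ≤ 1 - ∑ i ∈ s, p i + (∑ i ∈ s, p i) ^ 2 := by
  classical
  induction s using Finset.induction with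
  | empty => simp
  | insert a s ha ih =>
    rw [Finset.prod_insert ha, Finset.sum_insert ha]
    have hpa0 := h0 a (Finset.mem_insert_self a s)
    have hpa1 := h1 a (Finset.mem_insert_self a s)
    have hS0 : 0 ≤ ∑ i ∈ s, p i :=
      Finset.sum_nonneg fun i hi => h0 i (Finset.mem_insert_of_mem hi)
    have ih := ih (fun i hi => h0 i (Finset.mem_insert_of_mem hi))
      (fun i hi => h1 i (Finset.mem_insert_of_mem hi))
    calc (1 - p a) * ∏ i ∈ s, (1 - p i)
        ≤ (1 - p a) * (1 - ∑ i ∈ s, p i + (∑ i ∈ s, p i) ^ 2) := by gcongr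
      _ ≤ 1 - (p a + ∑ i ∈ s, p i) + (p a + ∑ i ∈ s, p i) ^ 2 := by nlinarith

section Simplex

variable {ι : Type*} [Fintype ι] {ξ : ι → ℝ}

lemma sum_rpow_le_one_of_mem_stdSimplex (hξ : ξ ∈ stdSimplex ℝ ι) {p : ℝ} (hp : 1 ≤ p) :
    ∑ i, ξ i ^ p ≤ 1 :=
  hξ.2 ▸ Finset.sum_le_sum fun i _ =>
    Real.rpow_le_self_of_le_one (hξ.1 i) (mem_Icc_of_mem_stdSimplex hξ i).2 hp

lemma one_le_sum_rpow_of_mem_stdSimplex (hξ : ξ ∈ stdSimplex ℝ ι) {p : ℝ} (hp : p ≤ 1) :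
    1 ≤ ∑ i, ξ i ^ p :=
  hξ.2 ▸ Finset.sum_le_sum fun i _ =>
    Real.self_le_rpow_of_le_one (hξ.1 i) (mem_Icc_of_mem_stdSimplex hξ i).2 hp

lemma exists_lt_mul_or_exists_ne_lt_lt (hξ : ξ ∈ stdSimplex ℝ ι) {y : ι → ℝ} {a b : ℝ}
    (hb : 0 ≤ b) (h : a + b < ∑ i, ξ i * y i) :
    (∃ i, a < ξ i * y i) ∨ ∃ i j, i ≠ j ∧ b < y i ∧ b < y j := by
  classical
  by_contra! hne
  obtain ⟨hsmall, hpair⟩ := hne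
  obtain ⟨k, -, -⟩ := Finset.exists_ne_zero_of_sum_ne_zero (hξ.2 ▸ one_ne_zero : ∑ i, ξ i ≠ 0)
  -- At an index `i` maximising `y`, every other `y j` is at most `b`, with total weight `≤ 1`.
  obtain ⟨i, -, hi⟩ := Finset.exists_max_image Finset.univ y ⟨k, Finset.mem_univ k⟩
  have hrest : ∀ j ∈ Finset.univ.erase i, ξ j * y j ≤ ξ j * b := by
    intro j hj
    refine mul_le_mul_of_nonneg_left (le_of_not_gt fun hjb => ?_) (hξ.1 j)
    exact (hpair i j (Finset.ne_of_mem_erase hj).symm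
      (hjb.trans_le (hi j (Finset.mem_univ j)))).not_gt hjb
  have hweight : ∑ j ∈ Finset.univ.erase i, ξ j ≤ 1 :=
    hξ.2 ▸ Finset.sum_le_sum_of_subset_of_nonneg (Finset.erase_subset i _)
      fun j _ _ => hξ.1 j
  have hsum : ∑ j, ξ j * y j ≤ a + b :=
    calc ∑ j, ξ j * y j
        = ξ i * y i + ∑ j ∈ Finset.univ.erase i, ξ j * y j :=
          (Finset.add_sum_erase _ _ (Finset.mem_univ i)).symm
      _ ≤ a + (∑ j ∈ Finset.univ.erase i, ξ j) * b := by
          rw [Finset.sum_mul]; exact add_le_add (hsmall i) (Finset.sum_le_sum hrest)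
      _ ≤ a + b := by gcongr; exact mul_le_of_le_one_left hb hweight
  linarith

end Simplex

section TailProb

variable {Ω : Type*} [MeasurableSpace Ω] {μ : Measure Ω}

lemma ProbabilityTheory.IdentDistrib.tailProb_eq {X X' : Ω → ℝ} (h : IdentDistrib X X' μ μ) :
    tailProb μ X = tailProb μ X' :=
  funext fun _ => congrArg ENNReal.toReal (h.measure_mem_eq measurableSet_Ioi)

lemma tailProb_const_mul {a : ℝ} (ha : 0 < a) (X : Ω → ℝ) (t : ℝ) :
    tailProb μ (fun ω => a * X ω) t = tailProb μ X (t * a⁻¹) := by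
  simp only [tailProb, ← div_eq_mul_inv, div_lt_iff₀' ha]

lemma tailProb_zero_mul (X : Ω → ℝ) {t : ℝ} (ht : 0 ≤ t) :
    tailProb μ (fun ω => 0 * X ω) t = 0 := by
  simp [tailProb, ht.not_gt]

lemma antitone_tailProb [IsFiniteMeasure μ] (X : Ω → ℝ) : Antitone (tailProb μ X) :=
  fun _ _ hst => measureReal_mono fun _ hω => hst.trans_lt hω

end TailProb

namespace RegVarying

variable {Ω : Type*} [MeasurableSpace Ω] {μ : Measure Ω} {W : Ω → ℝ} {α : ℝ}

lemma tailProb_pos [IsFiniteMeasure μ] (hrv : RegVarying μ W α) (t : ℝ) : 0 < tailProb μ W t :=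
  ENNReal.toReal_pos (hrv.1 t).ne' (measure_ne_top μ _)

/-- If the limit `L` of the antitone tail were positive, `P(W > 2t) / P(W > t)` would tend to
`L / L = 1` instead of `2 ^ (-α) < 1`. -/
lemma tendsto_tailProb_atTop [IsFiniteMeasure μ] (hrv : RegVarying μ W α) (hα : 0 < α) :
    Tendsto (tailProb μ W) atTop (𝓝 0) := by
  have hbdd : BddBelow (Set.range (tailProb μ W)) :=
    ⟨0, Set.forall_mem_range.2 fun _ => measureReal_nonneg⟩
  have hlim := tendsto_atTop_ciInf (antitone_tailProb W) hbdd
  obtain hL | hL := (le_ciInf fun _ => measureReal_nonneg : 0 ≤ ⨅ t, tailProb μ W t).eq_or_lt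
  · rwa [← hL] at hlim
  exfalso
  have hratio := (hlim.comp (tendsto_id.atTop_mul_const two_pos)).div hlim hL.ne'
  have h2 : (2 : ℝ) ^ (-α) = 1 := by
    rw [← div_self hL.ne']; exact tendsto_nhds_unique (hrv.2 2 two_pos) hratio
  exact (Real.rpow_lt_one_of_one_lt_of_neg one_lt_two (neg_neg_iff_pos.2 hα)).ne h2

lemma tendsto_tailProb_const_mul_div (hrv : RegVarying μ W α) (hα : 0 < α) {a : ℝ} (ha : 0 ≤ a) :
    Tendsto (fun t => tailProb μ (fun ω => a * W ω) t / tailProb μ W t) atTop (𝓝 (a ^ α)) := by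
  obtain rfl | ha := ha.eq_or_lt
  · rw [Real.zero_rpow hα.ne']
    refine tendsto_const_nhds.congr' ?_
    filter_upwards [eventually_ge_atTop 0] with t ht
    rw [tailProb_zero_mul W ht, zero_div]
  · have h := hrv.2 a⁻¹ (inv_pos.2 ha)
    rw [Real.inv_rpow ha.le, Real.rpow_neg ha.le, inv_inv] at h
    simp only [tailProb_const_mul ha]
    exact h

end RegVarying

section Portfolio

variable {Ω : Type*} [MeasurableSpace Ω] {μ : Measure Ω} {ι : Type*} [Fintype ι]
  {Y : Ω → ι → ℝ} {W : Ω → ℝ} {ξ : ι → ℝ} {α : ℝ}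

lemma tailProb_sum_le_of_pairwise_indepFun [IsFiniteMeasure μ]
    (hY : ∀ i, IdentDistrib (fun ω => Y ω i) W μ μ)
    (hind : Pairwise fun i j => IndepFun (fun ω => Y ω i) (fun ω => Y ω j) μ)
    (hξ : ξ ∈ stdSimplex ℝ ι) {β t : ℝ} (hβ0 : 0 < β) (hβ1 : β ≤ 1) (ht : 0 ≤ t) :
    tailProb μ (fun ω => ∑ i, ξ i * Y ω i) t ≤
      ∑ i, tailProb μ (fun ω => ξ i / β * W ω) t +
        Fintype.card ι ^ 2 * tailProb μ W (t * (1 - β)) ^ 2 := by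
  classical
  set s := t * (1 - β)
  have hsub : {ω | t < ∑ i, ξ i * Y ω i} ⊆ (⋃ i, {ω | t < ξ i / β * Y ω i}) ∪
      ⋃ p ∈ (Finset.univ : Finset ι).offDiag, {ω | s < Y ω p.1} ∩ {ω | s < Y ω p.2} := by
    intro ω hω
    obtain ⟨i, hi⟩ | ⟨i, j, hij, hi, hj⟩ := exists_lt_mul_or_exists_ne_lt_lt hξ
      (a := β * t) (b := s) (mul_nonneg ht (sub_nonneg.2 hβ1)) (by rwa [show β * t + s = t by ring])
    · refine Or.inl (Set.mem_iUnion.2 ⟨i, ?_⟩)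
      change t < ξ i / β * Y ω i
      rwa [div_mul_eq_mul_div, lt_div_iff₀ hβ0, mul_comm]
    · exact Or.inr (Set.mem_biUnion (x := (i, j)) (by simpa using hij) ⟨hi, hj⟩)
  have hpair : ∀ p ∈ (Finset.univ : Finset ι).offDiag,
      μ.real ({ω | s < Y ω p.1} ∩ {ω | s < Y ω p.2}) = tailProb μ W s ^ 2 := by
    rintro ⟨i, j⟩ hij
    have hij : i ≠ j := by simpa using hij
    change (μ ((fun ω => Y ω i) ⁻¹' Set.Ioi s ∩ (fun ω => Y ω j) ⁻¹' Set.Ioi s)).toReal = _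
    rw [(hind hij).measure_inter_preimage_eq_mul _ _ measurableSet_Ioi measurableSet_Ioi,
      ENNReal.toReal_mul, sq]
    exact congrArg₂ (· * ·) (congrFun (hY i).tailProb_eq s) (congrFun (hY j).tailProb_eq s)
  have hcard : ((Finset.univ : Finset ι).offDiag.card : ℝ) ≤ Fintype.card ι ^ 2 := by
    rw [Finset.offDiag_card, Finset.card_univ, sq]
    exact_mod_cast Nat.sub_le _ _
  calc tailProb μ (fun ω => ∑ i, ξ i * Y ω i) t
      ≤ μ.real (⋃ i, {ω | t < ξ i / β * Y ω i}) + μ.real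
          (⋃ p ∈ (Finset.univ : Finset ι).offDiag, {ω | s < Y ω p.1} ∩ {ω | s < Y ω p.2}) :=
        (measureReal_mono hsub).trans (measureReal_union_le _ _)
    _ ≤ ∑ i, tailProb μ (fun ω => ξ i / β * Y ω i) t +
          ∑ p ∈ (Finset.univ : Finset ι).offDiag, tailProb μ W s ^ 2 := by
        rw [← Finset.sum_congr rfl hpair]
        exact add_le_add (measureReal_iUnion_fintype_le _) (measureReal_biUnion_finset_le _ _)
    _ ≤ ∑ i, tailProb μ (fun ω => ξ i / β * W ω) t +
          Fintype.card ι ^ 2 * tailProb μ W s ^ 2 := by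
        have htransfer : ∀ i, tailProb μ (fun ω => ξ i / β * Y ω i) =
            tailProb μ (fun ω => ξ i / β * W ω) :=
          fun i => ((hY i).comp (measurable_const_mul (ξ i / β))).tailProb_eq
        simp only [htransfer, Finset.sum_const, nsmul_eq_mul]
        gcongr

lemma exists_rpow_neg_mul_lt {α S c : ℝ} (hc : S < c) :
    ∃ β, 0 < β ∧ β < 1 ∧ β ^ (-α) * S < c := by
  have hcont : Tendsto (fun β : ℝ => β ^ (-α) * S) (𝓝 1) (𝓝 S) := by
    simpa using ((Real.continuousAt_rpow_const 1 (-α) (Or.inl one_ne_zero)).tendsto).mul_const S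
  have hIoo : ∀ᶠ β in 𝓝[<] (1 : ℝ), β ∈ Set.Ioo 0 1 := Ioo_mem_nhdsLT zero_lt_one
  obtain ⟨β, ⟨hβ0, hβ1⟩, hβc⟩ :=
    (hIoo.and (nhdsWithin_le_nhds (hcont.eventually (gt_mem_nhds hc)))).exists
  exact ⟨β, hβ0, hβ1, hβc⟩

lemma RegVarying.eventually_tailProb_sum_le [IsFiniteMeasure μ] (hrv : RegVarying μ W α)
    (hα : 0 < α) (hY : ∀ i, IdentDistrib (fun ω => Y ω i) W μ μ)
    (hind : Pairwise fun i j => IndepFun (fun ω => Y ω i) (fun ω => Y ω j) μ)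
    (hξ : ξ ∈ stdSimplex ℝ ι) {c : ℝ} (hc : ∑ i, ξ i ^ α < c) :
    ∀ᶠ t in atTop, tailProb μ (fun ω => ∑ i, ξ i * Y ω i) t ≤ c * tailProb μ W t := by
  obtain ⟨β, hβ0, hβ1, hβc⟩ := exists_rpow_neg_mul_lt (α := α) hc
  set G := tailProb μ W
  have hsingle : Tendsto (fun t => ∑ i, tailProb μ (fun ω => ξ i / β * W ω) t / G t) atTop
      (𝓝 (β ^ (-α) * ∑ i, ξ i ^ α)) := by
    rw [Finset.mul_sum]
    refine tendsto_finsetSum _ fun i _ => ?_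
    convert hrv.tendsto_tailProb_const_mul_div hα (div_nonneg (hξ.1 i) hβ0.le) using 2
    rw [Real.div_rpow (hξ.1 i) hβ0.le, Real.rpow_neg hβ0.le, inv_mul_eq_div]
  have hpairs : Tendsto (fun t => Fintype.card ι ^ 2 * (G (t * (1 - β)) / G t) * G (t * (1 - β)))
      atTop (𝓝 0) := by
    have hratio : Tendsto (fun t => G (t * (1 - β)) / G t) atTop _ := hrv.2 (1 - β) (sub_pos.2 hβ1)
    have htail := (hrv.tendsto_tailProb_atTop hα).comp (tendsto_id.atTop_mul_const (sub_pos.2 hβ1))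
    simpa using (hratio.const_mul (Fintype.card ι ^ 2 : ℝ)).mul htail
  have hbound := (hsingle.add hpairs).eventually (gt_mem_nhds (by rwa [add_zero]))
  filter_upwards [hbound, eventually_ge_atTop 0] with t hlt ht
  have hG : 0 < G t := hrv.tailProb_pos t
  refine (tailProb_sum_le_of_pairwise_indepFun hY hind hξ hβ0 hβ1.le ht).trans ?_
  calc ∑ i, tailProb μ (fun ω => ξ i / β * W ω) t + Fintype.card ι ^ 2 * G (t * (1 - β)) ^ 2
      = (∑ i, tailProb μ (fun ω => ξ i / β * W ω) t / G t +
          Fintype.card ι ^ 2 * (G (t * (1 - β)) / G t) * G (t * (1 - β))) * G t := by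
        rw [add_mul, Finset.sum_mul]
        congr 1
        · exact Finset.sum_congr rfl fun i _ => (div_mul_cancel₀ _ hG.ne').symm
        · field_simp
    _ ≤ c * G t := by gcongr

lemma measureReal_iUnion_preimage_eq_one_sub_prod [IsProbabilityMeasure μ] {β : Type*}
    [MeasurableSpace β] {X : ι → Ω → β} (hind : iIndepFun X μ) (hX : ∀ i, AEMeasurable (X i) μ)
    {A : ι → Set β} (hA : ∀ i, MeasurableSet (A i)) :
    μ.real (⋃ i, X i ⁻¹' A i) = 1 - ∏ i, (1 - μ.real (X i ⁻¹' A i)) := by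
  have hcompl : ∀ i, μ.real (X i ⁻¹' (A i)ᶜ) = 1 - μ.real (X i ⁻¹' A i) := fun i =>
    probReal_compl_eq_one_sub₀ ((hX i).nullMeasurableSet_preimage (hA i))
  have hinter : μ.real (⋃ i, X i ⁻¹' A i)ᶜ = ∏ i, (1 - μ.real (X i ⁻¹' A i)) := by
    simp only [Set.compl_iUnion, ← Set.preimage_compl, ← hcompl]
    simpa [measureReal_def, ENNReal.toReal_prod] using congrArg ENNReal.toReal
      (hind.measure_inter_preimage_eq_mul Finset.univ fun i _ => (hA i).compl)
  rw [← hinter, probReal_compl_eq_one_sub₀ (NullMeasurableSet.iUnion fun i =>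
    (hX i).nullMeasurableSet_preimage (hA i)), sub_sub_cancel]

lemma sum_sub_sq_le_tailProb_sum_of_iIndepFun [IsProbabilityMeasure μ]
    (hY : ∀ i, IdentDistrib (fun ω => Y ω i) W μ μ) (hind : iIndepFun (fun i ω => Y ω i) μ)
    (hY0 : ∀ᵐ ω ∂μ, ∀ i, 0 ≤ Y ω i) (hξ : ∀ i, 0 ≤ ξ i) (t : ℝ) :
    ∑ i, tailProb μ (fun ω => ξ i * W ω) t - (∑ i, tailProb μ (fun ω => ξ i * W ω) t) ^ 2 ≤
      tailProb μ (fun ω => ∑ i, ξ i * Y ω i) t := by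
  set p := fun i => tailProb μ (fun ω => ξ i * W ω) t
  have hp : ∀ i, μ.real ((fun ω => Y ω i) ⁻¹' {x | t < ξ i * x}) = p i := fun i =>
    congrFun ((hY i).comp (measurable_const_mul (ξ i))).tailProb_eq t
  have hunion := measureReal_iUnion_preimage_eq_one_sub_prod hind
    (fun i => (hY i).aemeasurable_fst) (A := fun i => {x | t < ξ i * x})
    fun i => measurableSet_lt measurable_const (measurable_const_mul (ξ i))
  simp only [hp] at hunion
  have hsub : (⋃ i, (fun ω => Y ω i) ⁻¹' {x | t < ξ i * x}) ≤ᵐ[μ]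
      {ω | t < ∑ i, ξ i * Y ω i} := by
    filter_upwards [hY0] with ω hω hmem
    obtain ⟨i, hi⟩ := Set.mem_iUnion.1 hmem
    exact hi.trans_le
      (Finset.single_le_sum (fun j _ => mul_nonneg (hξ j) (hω j)) (Finset.mem_univ i))
  have hprod := prod_one_sub_le_one_sub_sum_add_sq Finset.univ (p := p)
    (fun i _ => measureReal_nonneg) fun i _ => measureReal_le_one
  calc ∑ i, p i - (∑ i, p i) ^ 2 ≤ 1 - ∏ i, (1 - p i) := by linarith
    _ = μ.real (⋃ i, (fun ω => Y ω i) ⁻¹' {x | t < ξ i * x}) := hunion.symm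
    _ ≤ tailProb μ (fun ω => ∑ i, ξ i * Y ω i) t :=
        ENNReal.toReal_mono (measure_ne_top _ _) (measure_mono_ae hsub)

lemma RegVarying.eventually_le_tailProb_sum [IsProbabilityMeasure μ] (hrv : RegVarying μ W α)
    (hα : 0 < α) (hY : ∀ i, IdentDistrib (fun ω => Y ω i) W μ μ)
    (hind : iIndepFun (fun i ω => Y ω i) μ) (hY0 : ∀ᵐ ω ∂μ, ∀ i, 0 ≤ Y ω i) (hξ : ∀ i, 0 ≤ ξ i)
    {c : ℝ} (hc : c < ∑ i, ξ i ^ α) :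
    ∀ᶠ t in atTop, c * tailProb μ W t ≤ tailProb μ (fun ω => ∑ i, ξ i * Y ω i) t := by
  set G := tailProb μ W
  set s := fun t => ∑ i, tailProb μ (fun ω => ξ i * W ω) t
  have hratio : Tendsto (fun t => s t / G t) atTop (𝓝 (∑ i, ξ i ^ α)) := by
    simp only [s, Finset.sum_div]
    exact tendsto_finsetSum _ fun i _ => hrv.tendsto_tailProb_const_mul_div hα (hξ i)
  have hs : Tendsto s atTop (𝓝 0) := by
    have h := hratio.mul (hrv.tendsto_tailProb_atTop hα)
    rw [mul_zero] at h
    exact h.congr fun t => div_mul_cancel₀ _ (hrv.tailProb_pos t).ne'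
  have hlim : Tendsto (fun t => s t / G t - s t / G t * s t) atTop (𝓝 (∑ i, ξ i ^ α)) := by
    simpa using hratio.sub (hratio.mul hs)
  filter_upwards [hlim.eventually (lt_mem_nhds hc)] with t ht
  have hG : 0 < G t := hrv.tailProb_pos t
  calc c * G t ≤ (s t / G t - s t / G t * s t) * G t := by gcongr
    _ = s t - s t ^ 2 := by field_simp
    _ ≤ _ := sum_sub_sq_le_tailProb_sum_of_iIndepFun hY hind hY0 hξ t

end Portfolio

lemma ProbabilityTheory.IdentDistrib.sum_mul_of_ae_eq {Ω : Type*} [MeasurableSpace Ω]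
    {μ : Measure Ω} {ι : Type*} [Fintype ι] {Z : Ω → ι → ℝ} {W : Ω → ℝ} {i₀ : ι}
    (hZ : IdentDistrib (fun ω => Z ω i₀) W μ μ) (hdep : ∀ i, ∀ᵐ ω ∂μ, Z ω i = Z ω i₀)
    {ξ : ι → ℝ} (hξ : ∑ i, ξ i = 1) :
    IdentDistrib (fun ω => ∑ i, ξ i * Z ω i) W μ μ := by
  have hae : (fun ω => Z ω i₀) =ᵐ[μ] fun ω => ∑ i, ξ i * Z ω i := by
    filter_upwards [ae_all_iff.2 hdep] with ω hω
    simp [hω, ← Finset.sum_mul, hξ]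
  exact (IdentDistrib.of_ae_eq hZ.aemeasurable_fst hae).symm.trans hZ

lemma aplVec_of_eventually_measureReal_le {Ω : Type*} [MeasurableSpace Ω] {μ : Measure Ω}
    [IsFiniteMeasure μ] {d : ℕ} {X Y : Ω → Fin d → ℝ}
    (h : ∀ ξ ∈ stdSimplex ℝ (Fin d), ∀ c : ℝ, 1 < c → ∀ᶠ t in atTop,
      μ.real {ω | t < ∑ i, ξ i * X ω i} ≤ c * μ.real {ω | t ≤ ∑ i, ξ i * Y ω i}) :
    AplVec μ X Y := by
  intro ξ hξ c hc
  obtain ⟨T, hT⟩ := (h ξ hξ c hc).exists_forall_of_atTop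
  refine ⟨T, fun t ht => ?_⟩
  rw [← ofReal_measureReal, ← ofReal_measureReal, ← ENNReal.ofReal_mul (by linarith)]
  exact ENNReal.ofReal_le_ofReal (hT t ht)

theorem independent_vs_comonotone_extremes
    {Ω : Type*} [MeasurableSpace Ω] (μ : Measure Ω) [IsProbabilityMeasure μ]
    {d : ℕ} [NeZero d] (W : Ω → ℝ) (hWm : Measurable W) (hW0 : ∀ ω, 0 ≤ W ω)
    (α : ℝ) (hα : 0 < α) (hrv : RegVarying μ W α)
    (Y Z : Ω → Fin d → ℝ)
    (hYm : ∀ i, Measurable fun ω => Y ω i) (hZm : ∀ i, Measurable fun ω => Z ω i)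
    (hYind : iIndepFun (fun i ω => Y ω i) μ)
    (hYdist : ∀ i, Measure.map (fun ω => Y ω i) μ = Measure.map W μ)
    (hZdep : ∀ i, ∀ᵐ ω ∂μ, Z ω i = Z ω 0)
    (hZdist : Measure.map (fun ω => Z ω 0) μ = Measure.map W μ) :
    (1 ≤ α → AplVec μ Y Z) ∧ (α ≤ 1 → AplVec μ Z Y) := by
  have hY : ∀ i, IdentDistrib (fun ω => Y ω i) W μ μ :=
    fun i => ⟨(hYm i).aemeasurable, hWm.aemeasurable, hYdist i⟩
  have hY0 : ∀ᵐ ω ∂μ, ∀ i, 0 ≤ Y ω i :=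
    ae_all_iff.2 fun i => (hY i).symm.ae_snd measurableSet_Ici (ae_of_all _ hW0)
  have hZ : ∀ ξ ∈ stdSimplex ℝ (Fin d), IdentDistrib (fun ω => ∑ i, ξ i * Z ω i) W μ μ :=
    fun ξ hξ => IdentDistrib.sum_mul_of_ae_eq
      ⟨(hZm 0).aemeasurable, hWm.aemeasurable, hZdist⟩ hZdep hξ.2
  refine ⟨fun hα1 => aplVec_of_eventually_measureReal_le fun ξ hξ c hc => ?_,
    fun hα1 => aplVec_of_eventually_measureReal_le fun ξ hξ c hc => ?_⟩
  · filter_upwards [hrv.eventually_tailProb_sum_le hα hY (fun i j hij => hYind.indepFun hij) hξ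
      ((sum_rpow_le_one_of_mem_stdSimplex hξ hα1).trans_lt hc)] with t ht
    calc _ ≤ c * tailProb μ W t := ht
      _ ≤ c * μ.real {ω | t ≤ W ω} := by
        gcongr; exact measureReal_mono fun ω (h : t < W ω) => h.le
      _ = c * μ.real {ω | t ≤ ∑ i, ξ i * Z ω i} :=
        congrArg (c * ·) (congrArg ENNReal.toReal ((hZ ξ hξ).measure_mem_eq measurableSet_Ici)).symm
  · filter_upwards [hrv.eventually_le_tailProb_sum hα hY hYind hY0 hξ.1
      ((inv_lt_one_of_one_lt₀ hc).trans_le (one_le_sum_rpow_of_mem_stdSimplex hξ hα1))] with t ht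
    calc _ = tailProb μ W t := congrFun (hZ ξ hξ).tailProb_eq t
      _ = c * (c⁻¹ * tailProb μ W t) := by field_simp
      _ ≤ c * tailProb μ (fun ω => ∑ i, ξ i * Y ω i) t := by gcongr
      _ ≤ c * μ.real {ω | t ≤ ∑ i, ξ i * Y ω i} := by
        gcongr; exact measureReal_mono fun ω (h : t < ∑ i, ξ i * Y ω i) => h.le
end

section
/- The asymptotic portfolio loss order is invariant under componentwise rescaling: if X and Y are ℝ^d-valued random vectors with X ≼apl Y, then for every v ∈ ℝ₊^d (all components nonnegative) the componentwise-rescaled vectors vX := (v⁽¹⁾X⁽¹⁾,…,v⁽ᵈ⁾X⁽ᵈ⁾) and vY := (v⁽¹⁾Y⁽¹⁾,…,v⁽ᵈ⁾Y⁽ᵈ⁾) satisfy vX ≼apl vY. -/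
open MeasureTheory ProbabilityTheory Filter

/-! Rescaling the portfolio `ξ ↦ v ξ` turns `ξᵀ(vX)` into `(vξ)ᵀX`. The weights `vξ` are
nonnegative but need not sum to one; dividing them by their total `s > 0` gives a portfolio in
the simplex and only rescales the threshold `t ↦ t / s`, which still tends to infinity. If
`s = 0`, the rescaled losses vanish and the bound is trivial for `t ≥ 0`. -/

lemma sum_mul_eq_mul_sum_div {ι : Type*} [Fintype ι] {s : ℝ} (hs : s ≠ 0) (w x : ι → ℝ) :
    ∑ i, w i * x i = s * ∑ i, w i / s * x i := by
  rw [Finset.mul_sum]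
  refine Finset.sum_congr rfl fun i _ => ?_
  field_simp

lemma div_sum_mem_stdSimplex {ι : Type*} [Fintype ι] {w : ι → ℝ} (hw : ∀ i, 0 ≤ w i)
    (hs : 0 < ∑ i, w i) : (fun i => w i / ∑ j, w j) ∈ stdSimplex ℝ ι :=
  ⟨fun i => div_nonneg (hw i) hs.le, by rw [← Finset.sum_div, div_self hs.ne']⟩

namespace AplVec

variable {Ω : Type*} [MeasurableSpace Ω] {μ : Measure Ω} {d : ℕ} {X Y : Ω → Fin d → ℝ}

lemma exists_tail_le_of_nonneg (h : AplVec μ X Y) {w : Fin d → ℝ} (hw : ∀ i, 0 ≤ w i)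
    {c : ℝ} (hc : 1 < c) :
    ∃ T : ℝ, ∀ t : ℝ, T ≤ t →
      μ {ω | t < ∑ i, w i * X ω i} ≤ ENNReal.ofReal c * μ {ω | t ≤ ∑ i, w i * Y ω i} := by
  set s := ∑ i, w i
  rcases (Finset.sum_nonneg fun i _ => hw i : 0 ≤ s).eq_or_lt with hs | hs
  · have hw0 : w = 0 :=
      funext fun i => (Finset.sum_eq_zero_iff_of_nonneg fun i _ => hw i).mp hs.symm i
        (Finset.mem_univ i)
    refine ⟨0, fun t ht => ?_⟩
    have hempty : {ω | t < ∑ i, w i * X ω i} = ∅ := by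
      simp [hw0, ht.not_gt]
    simp [hempty]
  · obtain ⟨T, hT⟩ := h _ (div_sum_mem_stdSimplex hw hs) c hc
    refine ⟨s * T, fun t ht => ?_⟩
    simp_rw [sum_mul_eq_mul_sum_div hs.ne' w, ← div_lt_iff₀' hs, ← div_le_iff₀' hs]
    exact hT (t / s) ((le_div_iff₀' hs).mpr ht)

end AplVec

theorem apl_rescaling_invariant_general
    {Ω : Type*} [MeasurableSpace Ω] (μ : Measure Ω)
    {d : ℕ} (X Y : Ω → Fin d → ℝ) (hXY : AplVec μ X Y)
    (v : Fin d → ℝ) (hv : ∀ i, 0 ≤ v i) :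
    AplVec μ (fun ω i => v i * X ω i) (fun ω i => v i * Y ω i) := by
  intro ξ hξ c hc
  simp_rw [← mul_assoc]
  exact hXY.exists_tail_le_of_nonneg (fun i => mul_nonneg (hξ.1 i) (hv i)) hc

theorem apl_rescaling_invariant
    {Ω : Type*} [MeasurableSpace Ω] (μ : Measure Ω) [IsProbabilityMeasure μ]
    {d : ℕ} (X Y : Ω → Fin d → ℝ) (hXY : AplVec μ X Y)
    (v : Fin d → ℝ) (hv : ∀ i, 0 ≤ v i) :
    AplVec μ (fun ω i => v i * X ω i) (fun ω i => v i * Y ω i) :=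
  apl_rescaling_invariant_general μ X Y hXY v hv
end
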